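/- arXiv:1405.7208 — 9 statements merged into one kernel-verified Lean document; each statement's English description precedes it below -/
import Mathlib

section
/- For every infinite cardinal κ, the cofinality of the partial order Fin(κ)^ℕ (functions from ℕ to finite subsets of κ, ordered coordinatewise by inclusion) equals the maximum of the dominating number 𝔡 and cof([κ]^ℵ₀), where [κ]^ℵ₀ is the family of countably infinite subsets of κ ordered by inclusion. -/
open Set Filter

universe u

/-- Least cardinality of a cofinal subset of a preorder. -/
noncomputable def poCof (α : Type u) [Preorder α] : Cardinal.{u} :=
  sInf { c | ∃ S : Set α, (∀ a : α, ∃ b ∈ S, a ≤ b) ∧ Cardinal.mk S = c }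

/-- `cof([X]^ℵ₀)`: cofinality of the family of countably infinite subsets of `X`,
ordered by inclusion. -/
noncomputable def ctblCof (X : Type u) : Cardinal.{u} :=
  poCof { A : Set X // A.Countable ∧ A.Infinite }

/-- The dominating number 𝔡. -/
noncomputable def dNum : Cardinal :=
  sInf { c | ∃ D : Set (ℕ → ℕ),
    (∀ f : ℕ → ℕ, ∃ g ∈ D, ∀ᶠ n in atTop, f n ≤ g n) ∧ Cardinal.mk D = c }

/-- The unbounding number 𝔟. -/
noncomputable def bNum : Cardinal :=
  sInf { c | ∃ B : Set (ℕ → ℕ),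
    (∀ g : ℕ → ℕ, ∃ f ∈ B, ¬ ∀ᶠ n in atTop, f n ≤ g n) ∧ Cardinal.mk B = c }

/-- An almost disjoint family on ℕ. -/
def AlmostDisjoint (𝒜 : Set (Set ℕ)) : Prop :=
  (∀ A ∈ 𝒜, A.Infinite) ∧ ∀ A ∈ 𝒜, ∀ B ∈ 𝒜, A ≠ B → (A ∩ B).Finite

/-- The underlying set of the Isbell–Mrówka space `Ψ(𝒜) = ℕ ∪ 𝒜`. -/
abbrev PsiSpace (𝒜 : Set (Set ℕ)) : Type := ℕ ⊕ ↥𝒜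

/-- The Isbell–Mrówka topology: naturals are isolated, and basic neighborhoods
of `A ∈ 𝒜` are `{A} ∪ (A \ F)` for finite `F`. -/
instance psiTop (𝒜 : Set (Set ℕ)) : TopologicalSpace (PsiSpace 𝒜) where
  IsOpen U := ∀ A : 𝒜, Sum.inr A ∈ U → { n : ℕ | n ∈ (A : Set ℕ) ∧ Sum.inl n ∉ U }.Finite
  isOpen_univ := by
    intro A _
    convert Set.finite_empty using 1
    ext n; simp
  isOpen_inter := by
    intro U V hU hV A hA
    apply ((hU A hA.1).union (hV A hA.2)).subset
    rintro n ⟨h1, h2⟩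
    by_cases h : Sum.inl n ∈ U
    · exact Or.inr ⟨h1, fun hv => h2 ⟨h, hv⟩⟩
    · exact Or.inl ⟨h1, h⟩
  isOpen_sUnion := by
    intro s hs A hA
    obtain ⟨t, ht, hAt⟩ := hA
    apply (hs t ht A hAt).subset
    rintro n ⟨h1, h2⟩
    exact ⟨h1, fun h => h2 ⟨t, ht, h⟩⟩

/-- `st(S, 𝒰) = ⋃ {U ∈ 𝒰 : U ∩ S ≠ ∅}`. -/
def starSet {X : Type*} (S : Set X) (𝒰 : Set (Set X)) : Set X :=
  ⋃₀ { U ∈ 𝒰 | (U ∩ S).Nonempty }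

def StarMenger (X : Type*) [TopologicalSpace X] : Prop :=
  ∀ 𝒰 : ℕ → Set (Set X), (∀ n, ∀ U ∈ 𝒰 n, IsOpen U) → (∀ n, ⋃₀ 𝒰 n = univ) →
    ∃ ℱ : ℕ → Set (Set X), (∀ n, ℱ n ⊆ 𝒰 n ∧ (ℱ n).Finite) ∧
      (⋃ n, starSet (⋃₀ ℱ n) (𝒰 n)) = univ

def StarHurewicz (X : Type*) [TopologicalSpace X] : Prop :=
  ∀ 𝒰 : ℕ → Set (Set X), (∀ n, ∀ U ∈ 𝒰 n, IsOpen U) → (∀ n, ⋃₀ 𝒰 n = univ) →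
    ∃ ℱ : ℕ → Set (Set X), (∀ n, ℱ n ⊆ 𝒰 n ∧ (ℱ n).Finite) ∧
      ∀ x : X, ∀ᶠ n in atTop, x ∈ starSet (⋃₀ ℱ n) (𝒰 n)

def StarRothberger (X : Type*) [TopologicalSpace X] : Prop :=
  ∀ 𝒰 : ℕ → Set (Set X), (∀ n, ∀ U ∈ 𝒰 n, IsOpen U) → (∀ n, ⋃₀ 𝒰 n = univ) →
    ∃ U : ℕ → Set X, (∀ n, U n ∈ 𝒰 n) ∧ (⋃ n, starSet (U n) (𝒰 n)) = univ

def StronglyStarMenger (X : Type*) [TopologicalSpace X] : Prop :=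
  ∀ 𝒰 : ℕ → Set (Set X), (∀ n, ∀ U ∈ 𝒰 n, IsOpen U) → (∀ n, ⋃₀ 𝒰 n = univ) →
    ∃ F : ℕ → Set X, (∀ n, (F n).Finite) ∧ (⋃ n, starSet (F n) (𝒰 n)) = univ

def StronglyStarHurewicz (X : Type*) [TopologicalSpace X] : Prop :=
  ∀ 𝒰 : ℕ → Set (Set X), (∀ n, ∀ U ∈ 𝒰 n, IsOpen U) → (∀ n, ⋃₀ 𝒰 n = univ) →
    ∃ F : ℕ → Set X, (∀ n, (F n).Finite) ∧
      ∀ x : X, ∀ᶠ n in atTop, x ∈ starSet (F n) (𝒰 n)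

section CofAux

open Classical in
/-- Index of `x` in an enumeration `e`, or `0` if not enumerated. -/
noncomputable def idxOf {X : Type*} (e : ℕ → X) (x : X) : ℕ :=
  if hx : ∃ m, e m = x then Nat.find hx else 0

open Classical in
lemma idxOf_spec {X : Type*} {e : ℕ → X} {x : X} (hx : ∃ m, e m = x) :
    e (idxOf e x) = x := by
  rw [idxOf, dif_pos hx]
  exact Nat.find_spec hx

open Classical in
lemma idxOf_apply {X : Type*} {e : ℕ → X} (he : Function.Injective e) (m : ℕ) :
    idxOf e (e m) = m := by
  have hx : ∃ m', e m' = e m := ⟨m, rfl⟩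
  rw [idxOf, dif_pos hx]
  exact he (Nat.find_spec hx)

lemma poCof_le {α : Type u} [Preorder α] {S : Set α} (hS : ∀ a : α, ∃ b ∈ S, a ≤ b) :
    poCof α ≤ Cardinal.mk S := csInf_le' ⟨S, hS, rfl⟩

lemma exists_poCof (α : Type u) [Preorder α] :
    ∃ S : Set α, (∀ a : α, ∃ b ∈ S, a ≤ b) ∧ Cardinal.mk S = poCof α := by
  have hne : { c | ∃ S : Set α, (∀ a : α, ∃ b ∈ S, a ≤ b) ∧ Cardinal.mk S = c }.Nonempty :=
    ⟨Cardinal.mk (univ : Set α), univ, fun a => ⟨a, mem_univ a, le_refl a⟩, rfl⟩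
  exact csInf_mem hne

lemma dNum_le {D : Set (ℕ → ℕ)} (hD : ∀ f : ℕ → ℕ, ∃ g ∈ D, ∀ᶠ n in atTop, f n ≤ g n) :
    dNum ≤ Cardinal.mk D := csInf_le' ⟨D, hD, rfl⟩

lemma exists_dNum : ∃ D : Set (ℕ → ℕ),
    (∀ f : ℕ → ℕ, ∃ g ∈ D, ∀ᶠ n in atTop, f n ≤ g n) ∧ Cardinal.mk D = dNum := by
  have hne : { c | ∃ D : Set (ℕ → ℕ),
      (∀ f : ℕ → ℕ, ∃ g ∈ D, ∀ᶠ n in atTop, f n ≤ g n) ∧ Cardinal.mk D = c }.Nonempty :=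
    ⟨_, univ, fun f => ⟨f, mem_univ f, Eventually.of_forall fun n => le_rfl⟩, rfl⟩
  exact csInf_mem hne

lemma dom_infinite {D : Set (ℕ → ℕ)}
    (hD : ∀ f : ℕ → ℕ, ∃ g ∈ D, ∀ᶠ n in atTop, f n ≤ g n) : D.Infinite := by
  rw [Set.Infinite]
  intro hf
  obtain ⟨g, hg, hev⟩ := hD (fun n => 1 + hf.toFinset.sup (fun g => g n))
  obtain ⟨N, hN⟩ := eventually_atTop.mp hev
  have h1 : 1 + hf.toFinset.sup (fun g => g N) ≤ g N := hN N le_rfl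
  have h2 : g N ≤ hf.toFinset.sup (fun g => g N) :=
    Finset.le_sup (f := fun g => g N) (hf.mem_toFinset.mpr hg)
  have h3 := h1.trans h2
  rw [Nat.one_add] at h3
  exact Nat.not_succ_le_self _ h3

lemma aleph0_le_dNum : Cardinal.aleph0 ≤ dNum := by
  obtain ⟨D, hD, hcard⟩ := exists_dNum
  rw [← hcard]
  haveI : Infinite D := (dom_infinite hD).to_subtype
  exact Cardinal.aleph0_le_mk D

lemma exists_dom_everywhere : ∃ D : Set (ℕ → ℕ),
    (∀ f : ℕ → ℕ, ∃ g ∈ D, ∀ n, f n ≤ g n) ∧ Cardinal.mk D ≤ dNum := by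
  obtain ⟨D, hD, hcard⟩ := exists_dNum
  refine ⟨Set.range (fun p : D × ℕ => fun n => (p.1 : ℕ → ℕ) n + p.2), ?_, ?_⟩
  · intro f
    obtain ⟨g, hg, hev⟩ := hD f
    obtain ⟨N, hN⟩ := eventually_atTop.mp hev
    refine ⟨_, ⟨(⟨g, hg⟩, (Finset.range N).sup f), rfl⟩, ?_⟩
    intro n
    by_cases h : N ≤ n
    · exact le_trans (hN n h) (Nat.le_add_right _ _)
    · have : f n ≤ (Finset.range N).sup f := Finset.le_sup (Finset.mem_range.mpr (by omega))
      simp only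
      omega
  · calc Cardinal.mk _ ≤ Cardinal.mk (D × ℕ) := Cardinal.mk_range_le
      _ = Cardinal.mk D * Cardinal.aleph0 := by
          simp [Cardinal.mk_prod]
      _ = dNum := by rw [hcard, Cardinal.mul_aleph0_eq aleph0_le_dNum]

end CofAux

/-- `cof(Fin(κ)^ℕ) = max(𝔡, cof([κ]^ℵ₀))`. -/
theorem cof_finFun_eq_max (κ : Cardinal.{0}) (hκ : Cardinal.aleph0 ≤ κ) :
    poCof (ℕ → Finset (Quotient.out κ)) = max dNum (ctblCof (Quotient.out κ)) := by
  classical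
  set X := Quotient.out κ with hX
  haveI : Infinite X := Cardinal.infinite_iff.mpr
    (by show Cardinal.aleph0 ≤ Cardinal.mk (Quotient.out κ); rwa [Cardinal.mk_out])
  have j : ℕ ↪ X := Infinite.natEmbedding X
  apply le_antisymm
  · -- `poCof ≤ max`
    obtain ⟨D, hD, hDcard⟩ := exists_dom_everywhere
    obtain ⟨C, hC, hCcard⟩ := exists_poCof {A : Set X // A.Countable ∧ A.Infinite}
    choose enum henum using fun A : C => (A.1.2.1).exists_eq_range (A.1.2.2.nonempty)
    set T : D × C → (ℕ → Finset X) :=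
      fun p => fun n => (Finset.range ((p.1 : ℕ → ℕ) n)).image (enum p.2) with hT
    have hcof : ∀ f : ℕ → Finset X, ∃ b ∈ Set.range T, f ≤ b := by
      intro f
      have hBc : (Set.range ⇑j ∪ ⋃ n, ↑(f n) : Set X).Countable :=
        (countable_range _).union (countable_iUnion fun n => (f n).countable_toSet)
      have hBi : (Set.range ⇑j ∪ ⋃ n, ↑(f n) : Set X).Infinite :=
        (Set.infinite_range_of_injective j.injective).mono subset_union_left
      obtain ⟨A, hAC, hBA⟩ := hC ⟨_, hBc, hBi⟩
      set cA : C := ⟨A, hAC⟩ with hcA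
      have hBA' : (Set.range ⇑j ∪ ⋃ n, ↑(f n) : Set X) ⊆ (A : Set X) := hBA
      obtain ⟨g, hgD, hg⟩ := hD (fun n => 1 + (f n).sup (fun x => idxOf (enum cA) x))
      refine ⟨T (⟨g, hgD⟩, cA), mem_range_self _, ?_⟩
      intro n
      rw [hT]
      simp only
      rw [Finset.le_iff_subset]
      intro x hx
      have hxr : x ∈ Set.range (enum cA) := by
        rw [← henum cA]
        exact hBA' (Or.inr (mem_iUnion.mpr ⟨n, hx⟩))
      have h1 : idxOf (enum cA) x ≤ (f n).sup (fun x => idxOf (enum cA) x) :=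
        Finset.le_sup hx
      have h2 : 1 + (f n).sup (fun x => idxOf (enum cA) x) ≤ g n := hg n
      have h3 : idxOf (enum cA) x < g n := by
        refine lt_of_lt_of_le ?_ h2
        rw [Nat.one_add]
        exact Nat.lt_succ_of_le h1
      exact Finset.mem_image.mpr ⟨idxOf (enum cA) x, Finset.mem_range.mpr h3, idxOf_spec hxr⟩
    refine le_trans (poCof_le hcof) ?_
    calc Cardinal.mk (Set.range T) ≤ Cardinal.mk (D × C) := Cardinal.mk_range_le
      _ = Cardinal.mk D * Cardinal.mk C := by simp [Cardinal.mk_prod]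
      _ ≤ dNum * ctblCof X := mul_le_mul' hDcard (le_of_eq hCcard)
      _ ≤ max dNum (ctblCof X) := by
          have h := Cardinal.mul_le_max dNum (ctblCof X)
          rwa [max_eq_left (le_trans aleph0_le_dNum (le_max_left _ _))] at h
  · -- `max ≤ poCof`
    obtain ⟨S, hS, hScard⟩ := exists_poCof (ℕ → Finset X)
    rw [← hScard]
    apply max_le
    · -- `dNum ≤ mk S`
      set G : S → (ℕ → ℕ) := fun s => fun n => 1 + (s.1 n).sup (fun x => idxOf ⇑j x) with hG
      refine le_trans (dNum_le (D := Set.range G) ?_) Cardinal.mk_range_le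
      intro h
      obtain ⟨s, hsS, hs⟩ := hS (fun n => (Finset.range (h n + 1)).image ⇑j)
      refine ⟨G ⟨s, hsS⟩, mem_range_self _, Eventually.of_forall fun n => ?_⟩
      have hmem : j (h n) ∈ s n := by
        have h1 : (Finset.range (h n + 1)).image ⇑j ⊆ s n := Finset.le_iff_subset.mp (hs n)
        exact h1 (Finset.mem_image_of_mem _ (Finset.mem_range.mpr (Nat.lt_succ_self _)))
      have h2 : idxOf ⇑j (j (h n)) ≤ (s n).sup (fun x => idxOf ⇑j x) := Finset.le_sup hmem
      rw [idxOf_apply j.injective] at h2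
      exact le_trans h2 (Nat.le_add_left _ 1)
    · -- `ctblCof X ≤ mk S`
      set F : S → {A : Set X // A.Countable ∧ A.Infinite} := fun s =>
        ⟨Set.range ⇑j ∪ ⋃ n, ↑(s.1 n),
          (countable_range _).union (countable_iUnion fun n => (s.1 n).countable_toSet),
          (Set.infinite_range_of_injective j.injective).mono subset_union_left⟩ with hF
      refine le_trans (poCof_le (S := Set.range F) ?_) Cardinal.mk_range_le
      rintro ⟨B, hBc, hBi⟩
      obtain ⟨b, hb⟩ := hBc.exists_eq_range hBi.nonempty
      obtain ⟨s, hsS, hs⟩ := hS (fun n => (Finset.range (n + 1)).image b)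
      refine ⟨F ⟨s, hsS⟩, mem_range_self _, ?_⟩
      show B ⊆ Set.range ⇑j ∪ ⋃ n, ↑(s n)
      rw [hb]
      rintro x ⟨k, rfl⟩
      refine Or.inr (mem_iUnion.mpr ⟨k, ?_⟩)
      have h1 : (Finset.range (k + 1)).image b ⊆ s k := Finset.le_iff_subset.mp (hs k)
      exact h1 (Finset.mem_image_of_mem _ (Finset.mem_range.mpr (Nat.lt_succ_self _)))
end

section
/- For every infinite cardinal κ, the minimal cardinality of a family F ⊆ Fin(κ)^ℕ such that for every g ∈ Fin(κ)^ℕ there exists f ∈ F with g(n) ⊆ f(n) for infinitely many n, equals the maximum of the unbounding number 𝔟 and cof([κ]^ℵ₀). -/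
open Set Filter

universe u

private lemma univ_unb : ∀ g : ℕ → ℕ, ∃ f ∈ (Set.univ : Set (ℕ → ℕ)), ¬ ∀ᶠ n in atTop, f n ≤ g n := by
  intro g
  refine ⟨fun n => g n + 1, trivial, fun h => ?_⟩
  obtain ⟨n, hn⟩ := h.exists
  simp only [] at hn
  omega

private lemma exists_bNum : ∃ B : Set (ℕ → ℕ),
    (∀ g : ℕ → ℕ, ∃ f ∈ B, ¬ ∀ᶠ n in atTop, f n ≤ g n) ∧ Cardinal.mk B = bNum := by
  have : bNum ∈ { c | ∃ B : Set (ℕ → ℕ),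
      (∀ g : ℕ → ℕ, ∃ f ∈ B, ¬ ∀ᶠ n in atTop, f n ≤ g n) ∧ Cardinal.mk B = c } := by
    rw [bNum]
    exact csInf_mem ⟨_, Set.univ, univ_unb, rfl⟩
  exact this

private lemma aleph0_le_bNum : Cardinal.aleph0 ≤ bNum := by
  rw [bNum]
  refine le_csInf ⟨_, Set.univ, univ_unb, rfl⟩ ?_
  rintro c ⟨B, hB, rfl⟩
  by_contra h
  push_neg at h
  have hBfin : B.Finite := Cardinal.lt_aleph0_iff_set_finite.mp h
  obtain ⟨f, hfB, hf⟩ := hB (fun n => hBfin.toFinset.sup (fun f => f n))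
  exact hf (Eventually.of_forall fun n =>
    Finset.le_sup (f := fun f => f n) (hBfin.mem_toFinset.mpr hfB))

private lemma exists_ctblCof (X : Type) :
    ∃ S : Set {A : Set X // A.Countable ∧ A.Infinite},
      (∀ a, ∃ b ∈ S, a ≤ b) ∧ Cardinal.mk S = ctblCof X := by
  have : ctblCof X ∈ { c | ∃ S : Set {A : Set X // A.Countable ∧ A.Infinite},
      (∀ a, ∃ b ∈ S, a ≤ b) ∧ Cardinal.mk S = c } := by
    rw [ctblCof, poCof]
    exact csInf_mem ⟨_, Set.univ, fun a => ⟨a, trivial, le_refl a⟩, rfl⟩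
  exact this

private lemma bNum_le {B : Set (ℕ → ℕ)}
    (h : ∀ g : ℕ → ℕ, ∃ f ∈ B, ¬ ∀ᶠ n in atTop, f n ≤ g n) : bNum ≤ Cardinal.mk B :=
  csInf_le' ⟨B, h, rfl⟩

private lemma ctblCof_le {X : Type} {S : Set {A : Set X // A.Countable ∧ A.Infinite}}
    (h : ∀ a, ∃ b ∈ S, a ≤ b) : ctblCof X ≤ Cardinal.mk S :=
  csInf_le' ⟨S, h, rfl⟩


/-- the minimal cardinality of a family `F ⊆ Fin(κ)^ℕ` which is "cofinal
for infinitely many coordinates" equals `max(𝔟, cof([κ]^ℵ₀))`. -/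
theorem infinitelyOften_cof_eq_max (κ : Cardinal.{0}) (hκ : Cardinal.aleph0 ≤ κ) :
    sInf { c : Cardinal | ∃ F : Set (ℕ → Finset (Quotient.out κ)),
        (∀ g : ℕ → Finset (Quotient.out κ), ∃ f ∈ F, { n : ℕ | g n ⊆ f n }.Infinite) ∧
        Cardinal.mk F = c }
      = max bNum (ctblCof (Quotient.out κ)) := by
  classical
  set X := Quotient.out κ with hXdef
  haveI hXinf : Infinite X := Cardinal.infinite_iff.mpr (by rw [Cardinal.mk_out]; exact hκ)
  obtain ⟨e⟩ : Nonempty (ℕ ↪ X) := ⟨Infinite.natEmbedding X⟩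
  have hne : { c : Cardinal | ∃ F : Set (ℕ → Finset X),
      (∀ g : ℕ → Finset X, ∃ f ∈ F, { n : ℕ | g n ⊆ f n }.Infinite) ∧
      Cardinal.mk F = c }.Nonempty :=
    ⟨_, Set.univ, fun g => ⟨g, trivial, by
      simpa using (Set.infinite_univ : (Set.univ : Set ℕ).Infinite)⟩, rfl⟩
  apply le_antisymm
  · -- upper bound: build a covering family of size ≤ max
    obtain ⟨S, hScof, hSmk⟩ := exists_ctblCof X
    obtain ⟨B, hBunb, hBmk⟩ := exists_bNum
    have henum : ∀ A : {A : Set X // A.Countable ∧ A.Infinite}, ∃ b : ℕ → X, A.1 = Set.range b :=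
      fun A => A.2.1.exists_eq_range A.2.2.nonempty
    choose bA hbA using henum
    set Φ : ({A : Set X // A.Countable ∧ A.Infinite} × (ℕ → ℕ)) → (ℕ → Finset X) :=
      fun p n => (Finset.range (p.2 n + 1)).image (bA p.1) with hΦdef
    set F : Set (ℕ → Finset X) := Φ '' (S ×ˢ B) with hFdef
    have hcov : ∀ g : ℕ → Finset X, ∃ f ∈ F, { n : ℕ | g n ⊆ f n }.Infinite := by
      intro g
      set C : Set X := Set.range e ∪ ⋃ n, ↑(g n) with hCdef
      have hCc : C.Countable :=
        (Set.countable_range e).union (Set.countable_iUnion fun n => (g n).finite_toSet.countable)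
      have hCi : C.Infinite :=
        Set.Infinite.mono Set.subset_union_left (Set.infinite_range_of_injective e.injective)
      obtain ⟨A, hAS, hCA⟩ := hScof ⟨C, hCc, hCi⟩
      have hCA' : C ⊆ A.1 := hCA
      have hgA : ∀ n, ↑(g n) ⊆ A.1 := fun n =>
        subset_trans (subset_trans (Set.subset_iUnion (fun n => ((g n : Finset X) : Set X)) n)
          Set.subset_union_right) hCA'
      set idx : X → ℕ := fun x => sInf {k | bA A k = x} with hidxdef
      have hidx : ∀ x ∈ A.1, bA A (idx x) = x := by
        intro x hx
        have : x ∈ Set.range (bA A) := (hbA A) ▸ hx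
        obtain ⟨k, hk⟩ := this
        have hne' : {k | bA A k = x}.Nonempty := ⟨k, hk⟩
        exact Nat.sInf_mem hne'
      set ψ : ℕ → ℕ := fun n => (g n).sup idx with hψdef
      obtain ⟨h, hhB, hh⟩ := hBunb ψ
      rw [Filter.not_eventually] at hh
      refine ⟨Φ (A, h), Set.mem_image_of_mem _ (Set.mk_mem_prod hAS hhB), ?_⟩
      rw [← Nat.cofinite_eq_atTop, Filter.frequently_cofinite_iff_infinite] at hh
      refine hh.mono fun n hn => ?_
      have hn' : ψ n < h n := Nat.lt_of_not_le hn
      intro x hx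
      have hxA : x ∈ A.1 := hgA n hx
      have h1 : idx x ≤ ψ n := Finset.le_sup hx
      have h2 : idx x ∈ Finset.range (h n + 1) := Finset.mem_range.mpr (by omega)
      simp only [hΦdef]
      exact Finset.mem_image.mpr ⟨idx x, h2, hidx x hxA⟩
    have hmk : Cardinal.mk F ≤ max bNum (ctblCof X) := by
      have h1 : Cardinal.mk F ≤ Cardinal.mk (↥(S ×ˢ B)) := Cardinal.mk_image_le
      have h2 : Cardinal.mk (↥(S ×ˢ B)) = Cardinal.mk S * Cardinal.mk B := by
        rw [Cardinal.mk_congr (Equiv.Set.prod S B)]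
        simp [Cardinal.mk_prod]
      rw [h2, hSmk, hBmk] at h1
      refine h1.trans ?_
      have hmax : Cardinal.aleph0 ≤ max bNum (ctblCof X) := le_max_of_le_left aleph0_le_bNum
      calc ctblCof X * bNum ≤ max bNum (ctblCof X) * max bNum (ctblCof X) :=
            mul_le_mul' (le_max_right _ _) (le_max_left _ _)
        _ = max bNum (ctblCof X) := Cardinal.mul_eq_self hmax
    have hmem : Cardinal.mk F ∈ { c : Cardinal | ∃ F : Set (ℕ → Finset X),
        (∀ g : ℕ → Finset X, ∃ f ∈ F, { n : ℕ | g n ⊆ f n }.Infinite) ∧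
        Cardinal.mk F = c } := ⟨F, hcov, rfl⟩
    exact (csInf_le' hmem).trans hmk
  · -- lower bound
    refine le_csInf hne ?_
    rintro c ⟨F, hF, rfl⟩
    refine max_le ?_ ?_
    · -- bNum ≤ |F|
      have φspec : ∀ f : ℕ → Finset X, ∀ n : ℕ, ∃ m, ∀ k, e k ∈ f n → k < m := by
        intro f n
        have hfin : {k | e k ∈ f n}.Finite :=
          Set.Finite.preimage (Set.injOn_of_injective e.injective) (f n).finite_toSet
        obtain ⟨m, hm⟩ := hfin.bddAbove
        exact ⟨m + 1, fun k hk => Nat.lt_succ_of_le (hm hk)⟩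
      set φ : (ℕ → Finset X) → (ℕ → ℕ) := fun f n => (φspec f n).choose with hφdef
      have hφ : ∀ f n k, e k ∈ f n → k < φ f n := fun f n => (φspec f n).choose_spec
      have hΦunb : ∀ g : ℕ → ℕ, ∃ u ∈ φ '' F, ¬ ∀ᶠ n in atTop, u n ≤ g n := by
        intro g
        obtain ⟨f, hfF, hf⟩ := hF (fun n => {e (g n)})
        refine ⟨φ f, Set.mem_image_of_mem _ hfF, fun hev => ?_⟩
        have h1 : ∃ᶠ n in atTop, g n < φ f n := by
          rw [← Nat.cofinite_eq_atTop, Filter.frequently_cofinite_iff_infinite]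
          exact hf.mono fun n hn => hφ f n (g n) (Finset.singleton_subset_iff.mp hn)
        obtain ⟨n, hn1, hn2⟩ := (h1.and_eventually hev).exists
        omega
      exact (bNum_le hΦunb).trans Cardinal.mk_image_le
    · -- ctblCof ≤ |F|
      set Ψ : (ℕ → Finset X) → {A : Set X // A.Countable ∧ A.Infinite} :=
        fun f => ⟨Set.range e ∪ ⋃ n, ↑(f n),
          (Set.countable_range e).union
            (Set.countable_iUnion fun n => (f n).finite_toSet.countable),
          Set.Infinite.mono Set.subset_union_left
            (Set.infinite_range_of_injective e.injective)⟩ with hΨdef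
      have hcof : ∀ a : {A : Set X // A.Countable ∧ A.Infinite}, ∃ b ∈ Ψ '' F, a ≤ b := by
        rintro ⟨A, hAc, hAi⟩
        obtain ⟨b, hb⟩ := hAc.exists_eq_range hAi.nonempty
        obtain ⟨f, hfF, hf⟩ := hF (fun n => (Finset.range (n + 1)).image b)
        refine ⟨Ψ f, Set.mem_image_of_mem _ hfF, ?_⟩
        show A ⊆ Set.range e ∪ ⋃ n, ↑(f n)
        intro x hx
        rw [hb] at hx
        obtain ⟨m, hm⟩ := hx
        obtain ⟨n, hn, hmn⟩ := hf.exists_gt m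
        have hmem : x ∈ (Finset.range (n + 1)).image b :=
          Finset.mem_image.mpr ⟨m, Finset.mem_range.mpr (by omega), hm⟩
        have : x ∈ ↑(f n) := hn hmem
        exact Or.inr (Set.mem_iUnion.mpr ⟨n, this⟩)
      exact (ctblCof_le hcof).trans Cardinal.mk_image_le
end

section
/- Let κ be an infinite cardinal and {F_α : α < κ} a cofinal subset of Fin(κ)^ℕ (ordered coordinatewise by inclusion). Then the family {F'_α : α < κ}, defined by F'_α(n) := F_α(n) \ {α} for all n, is also cofinal in Fin(κ)^ℕ. -/
open Set Filter

universe u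

/-- Enlarge `g n` by a point `x n` lying outside every `F β n` with `β ∈ g n`; a member `F α` of
the family above the enlarged sequence then cannot have `α ∈ g n`, since `x n ∈ F α n`. -/
theorem exists_forall_subset_and_notMem_of_cofinal {X : Type*} [Infinite X] [DecidableEq X]
    {F : X → ℕ → Finset X} (hF : ∀ g : ℕ → Finset X, ∃ α, ∀ n, g n ⊆ F α n)
    (g : ℕ → Finset X) : ∃ α, ∀ n, g n ⊆ F α n ∧ α ∉ g n := by
  choose x hx using fun n => Infinite.exists_notMem_finset ((g n).biUnion (F · n))
  obtain ⟨α, hα⟩ := hF fun n => insert (x n) (g n)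
  refine ⟨α, fun n => ⟨(Finset.subset_insert _ _).trans (hα n), fun hαg => hx n ?_⟩⟩
  exact Finset.mem_biUnion.2 ⟨α, hαg, hα n (Finset.mem_insert_self _ _)⟩

/-- if `{F_α : α < κ}` is cofinal in `Fin(κ)^ℕ`, then so is the family
`F'_α(n) := F_α(n) \ {α}`. -/
theorem cofinal_erase (κ : Cardinal.{0}) (hκ : Cardinal.aleph0 ≤ κ)
    (F : Quotient.out κ → ℕ → Finset (Quotient.out κ))
    (hF : ∀ g : ℕ → Finset (Quotient.out κ), ∃ α, ∀ n, g n ⊆ F α n) :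
    ∀ g : ℕ → Finset (Quotient.out κ), ∃ α, ∀ n,
      (g n : Set (Quotient.out κ)) ⊆ (F α n : Set (Quotient.out κ)) \ {α} := by
  intro g
  have : Infinite κ.out := by rwa [Cardinal.infinite_iff, Cardinal.mk_out]
  classical
  obtain ⟨α, hα⟩ := exists_forall_subset_and_notMem_of_cofinal hF g
  exact ⟨α, fun n => Set.subset_sdiff_singleton (Finset.coe_subset.2 (hα n).1) (hα n).2⟩
end

section
/- Let κ be an infinite cardinal, {F_α : α < κ} a cofinal subset of Fin(κ)^ℕ, and F ∈ Fin(κ)^ℕ. Then the set I := {α < κ : F(n) ⊆ F_α(n) for all n} is uncountable. -/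
/-! A countable set of indices `{α_k}` cannot be all of `I`: pick `x_k ∉ F_{α_k}(k)`, which
exists because `κ` is infinite, and dominate `n ↦ F(n) ∪ {x_n}` by some `F_α`. Then `α ∈ I`, yet
`F_α(k) ∋ x_k` rules out `α = α_k` for every `k`. -/

open Set Filter

universe u

theorem Finset.exists_ge_forall_not_le {X : Type*} [Infinite X] (F : ℕ → Finset X)
    (G : ℕ → ℕ → Finset X) : ∃ g, F ≤ g ∧ ∀ k, ¬ g ≤ G k := by
  choose x hx using fun n => (G n n).exists_notMem
  classical
  exact ⟨fun n => insert (x n) (F n), fun n => Finset.subset_insert _ _,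
    fun k hk => hx k (hk k (Finset.mem_insert_self _ _))⟩

theorem not_countable_setOf_le_of_forall_exists_le {P ι : Type*} [Preorder P]
    (hP : ∀ (a : P) (G : ℕ → P), ∃ b, a ≤ b ∧ ∀ k, ¬ b ≤ G k)
    (f : ι → P) (hf : ∀ a, ∃ i, a ≤ f i) (a : P) : ¬ {i | a ≤ f i}.Countable := by
  intro hc
  obtain ⟨e, he⟩ := hc.exists_eq_range (hf a)
  obtain ⟨b, hab, hb⟩ := hP a (f ∘ e)
  obtain ⟨i, hi⟩ := hf b
  obtain ⟨k, rfl⟩ : i ∈ range e := he ▸ hab.trans hi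
  exact hb k hi

/-- if `{F_α : α < κ}` is cofinal in `Fin(κ)^ℕ` and `F ∈ Fin(κ)^ℕ`, then
`I := {α : F(n) ⊆ F_α(n) for all n}` is uncountable. -/
theorem uncountable_dominating_indices (κ : Cardinal.{0}) (hκ : Cardinal.aleph0 ≤ κ)
    (Fam : Quotient.out κ → ℕ → Finset (Quotient.out κ))
    (hF : ∀ g : ℕ → Finset (Quotient.out κ), ∃ α, ∀ n, g n ⊆ Fam α n)
    (F : ℕ → Finset (Quotient.out κ)) :
    ¬ ({ α : Quotient.out κ | ∀ n, F n ⊆ Fam α n }).Countable := by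
  have : Infinite (Quotient.out κ) := by
    rw [Cardinal.infinite_iff, Cardinal.mk_out]
    exact hκ
  exact not_countable_setOf_le_of_forall_exists_le Finset.exists_ge_forall_not_le Fam hF F
end

section
/- For every uncountable cardinal κ of countable cofinality, cof([κ]^ℵ₀) > κ. -/
open Set Filter

universe u

/-!
If `cf κ = ω`, any family `S` of at most `κ` countable subsets of `κ` splits into countably many
subfamilies `Sₙ` with `|Sₙ| < κ`; as `κ` is uncountable, each union `⋃ Sₙ` still has size `< κ`.
Choosing `xₙ ∉ ⋃ Sₙ`, a countably infinite set containing every `xₙ` lies inside no member of `S`,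
so `S` is not cofinal in `[κ]^ℵ₀`.
-/

open Cardinal hiding univ

theorem poCof_eq_cof (α : Type u) [Preorder α] : poCof α = Order.cof α := by
  apply le_antisymm
  · obtain ⟨s, hs, hcard⟩ := Order.exists_cof_eq α
    exact csInf_le' ⟨s, hs, hcard⟩
  · exact le_csInf ⟨_, univ, IsCofinal.univ, rfl⟩ fun _ ⟨s, hs, hcard⟩ => hcard ▸ Order.cof_le hs

theorem mk_sUnion_lt_of_countable {α : Type u} {κ : Cardinal.{u}} (hκ : ℵ₀ < κ)
    {𝒜 : Set (Set α)} (h𝒜 : #𝒜 < κ) (hcount : ∀ A ∈ 𝒜, A.Countable) : #(⋃₀ 𝒜) < κ :=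
  calc #(⋃₀ 𝒜) ≤ #𝒜 * ⨆ A : 𝒜, #A := mk_sUnion_le 𝒜
    _ ≤ #𝒜 * ℵ₀ := by
      gcongr
      exact ciSup_le' fun A => le_aleph0_iff_set_countable.mpr (hcount A A.2)
    _ < κ := mul_lt_of_lt hκ.le h𝒜 hκ

theorem exists_iUnion_eq_univ_mk_lt_of_cof_ord_eq_aleph0 {κ : Cardinal.{u}}
    (hcf : κ.ord.cof = ℵ₀) {β : Type u} (hβ : #β ≤ κ) :
    ∃ s : ℕ → Set β, ⋃ n, s n = univ ∧ ∀ n, #(s n) < κ := by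
  have hκ : ℵ₀ ≤ κ := hcf ▸ Ordinal.cof_ord_le κ
  obtain ⟨T, hT, hcard⟩ := Order.exists_cof_eq κ.ord.ToType
  rw [Ordinal.cof_toType, hcf] at hcard
  have hTne : T.Nonempty := nonempty_coe_sort.mp (mk_ne_zero_iff.mp (hcard ▸ aleph0_ne_zero))
  obtain ⟨t, rfl⟩ := (le_aleph0_iff_set_countable.mp hcard.le).exists_eq_range hTne
  obtain ⟨g⟩ := (le_def _ _).mp (hβ.trans_eq (mk_ord_toType κ).symm)
  refine ⟨fun n => g ⁻¹' Iic (t n), eq_univ_of_forall fun b => ?_, fun n => ?_⟩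
  · obtain ⟨_, ⟨n, rfl⟩, hle⟩ := hT (g b)
    exact mem_iUnion.mpr ⟨n, hle⟩
  · refine (mk_preimage_of_injective g _ g.injective).trans_lt ?_
    have hIic := mk_Iic_lt (t n) (by rw [mk_ord_toType, Ordinal.type_toType])
      (hκ.trans_eq (mk_ord_toType κ).symm)
    rwa [mk_ord_toType] at hIic

theorem exists_countable_infinite_superset {X : Type u} [Infinite X] {A : Set X}
    (hA : A.Countable) : ∃ B, A ⊆ B ∧ B.Countable ∧ B.Infinite :=
  ⟨A ∪ range (Infinite.natEmbedding X), subset_union_left,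
    hA.union (countable_range _),
    (infinite_range_of_injective (Infinite.natEmbedding X).injective).mono subset_union_right⟩

theorem exists_countable_infinite_not_subset {X : Type u} [Infinite X] (𝒜 : ℕ → Set (Set X))
    (h𝒜 : ∀ n, #(⋃₀ 𝒜 n) < #X) :
    ∃ B : Set X, B.Countable ∧ B.Infinite ∧ ∀ n, ∀ A ∈ 𝒜 n, ¬ B ⊆ A := by
  have hx : ∀ n, ∃ x, x ∉ ⋃₀ 𝒜 n := fun n => by
    by_contra! h
    exact (h𝒜 n).ne (by rw [eq_univ_of_forall h, mk_univ])
  choose x hx using hx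
  obtain ⟨B, hxB, hB⟩ := exists_countable_infinite_superset (countable_range x)
  exact ⟨B, hB.1, hB.2, fun n A hA hBA => hx n ⟨A, hA, hBA (hxB ⟨n, rfl⟩)⟩⟩

theorem lt_ctblCof_of_cof_ord_eq_aleph0 {X : Type u} (hX : ℵ₀ < #X)
    (hcf : (#X).ord.cof = ℵ₀) : #X < ctblCof X := by
  have : Infinite X := infinite_iff.mpr hX.le
  obtain ⟨S, hS, hcard⟩ := Order.exists_cof_eq { A : Set X // A.Countable ∧ A.Infinite }
  rw [ctblCof, poCof_eq_cof, ← hcard]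
  by_contra! hle
  obtain ⟨s, hs, hslt⟩ := exists_iUnion_eq_univ_mk_lt_of_cof_ord_eq_aleph0 hcf hle
  let 𝒜 n : Set (Set X) := (fun A : S => (A : Set X)) '' s n
  have h𝒜 : ∀ n, #(⋃₀ 𝒜 n) < #X := fun n =>
    mk_sUnion_lt_of_countable hX (mk_image_le.trans_lt (hslt n)) (by
      rintro _ ⟨A, -, rfl⟩
      exact A.1.2.1)
  obtain ⟨B, hBc, hBi, hB⟩ := exists_countable_infinite_not_subset 𝒜 h𝒜
  obtain ⟨A, hAS, hBA⟩ := hS ⟨B, hBc, hBi⟩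
  obtain ⟨n, hn⟩ := mem_iUnion.mp (hs ▸ mem_univ (⟨A, hAS⟩ : S))
  exact hB n A ⟨⟨A, hAS⟩, hn, rfl⟩ hBA

/-- for uncountable `κ` of countable cofinality, `cof([κ]^ℵ₀) > κ`. -/
theorem ctblCof_gt_of_countable_cof (κ : Cardinal.{0}) (hκ : Cardinal.aleph0 < κ)
    (hcf : (Cardinal.ord κ).cof = Cardinal.aleph0) :
    κ < ctblCof (Quotient.out κ) := by
  rw [← mk_out κ] at hκ hcf
  conv_lhs => rw [← mk_out κ]
  exact lt_ctblCof_of_cof_ord_eq_aleph0 hκ hcf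
end

section
/- Let 𝒜 ⊆ P(ℕ) be an almost disjoint family. The Isbell–Mrówka space Ψ(𝒜) is star-Menger if and only if: for every function A ↦ f_A from 𝒜 to ℕ^ℕ, there exist finite sets ℱ₁, ℱ₂, … ⊆ 𝒜 such that for every A ∈ 𝒜 there is n with (A \ f_A(n)) ∩ ⋃_{B∈ℱ_n}(B \ f_B(n)) ≠ ∅. -/
open Set Filter

universe u

/-
Given `f`, cover `Ψ(𝒜)` at stage `n` by the basic neighbourhoods `{A} ∪ (A \ f_A(n))` and the
singletons of `ℕ`. The only member containing the point `A` is its own neighbourhood, so a star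
of a finite subfamily reaches `A` only if that neighbourhood meets one of finitely many members,
and each member can be traded for a single `B ∈ 𝒜` whose tail `B \ f_B(n)` it meets (`A` being
infinite covers the case where the neighbourhood of `A` itself was chosen).
Conversely, shrink a member of an arbitrary open cover around each `A` to a basic neighbourhood to
read off the bounds `f_A(n)`; the combinatorial witnesses then pick finitely many cover members,
and one more member at stage `k`, containing `k`, catches the point `k`.
-/

theorem mem_starSet {X : Type*} {S U : Set X} {𝒰 : Set (Set X)} {x : X} (hU : U ∈ 𝒰)
    (hx : x ∈ U) (hUS : (U ∩ S).Nonempty) : x ∈ starSet S 𝒰 :=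
  ⟨U, ⟨hU, hUS⟩, hx⟩

namespace PsiSpace

def StarMengerCondition (𝒜 : Set (Set ℕ)) : Prop :=
  ∀ f : 𝒜 → ℕ → ℕ, ∃ ℱ : ℕ → Finset 𝒜, ∀ A : 𝒜, ∃ n : ℕ,
    (((A : Set ℕ) \ Iio (f A n)) ∩ ⋃ B ∈ ℱ n, ((B : Set ℕ) \ Iio (f B n))).Nonempty

variable {𝒜 : Set (Set ℕ)}

def basicNhd (A : 𝒜) (m : ℕ) : Set (PsiSpace 𝒜) :=
  insert (Sum.inr A) (Sum.inl '' ((A : Set ℕ) \ Iio m))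

@[simp]
theorem inr_mem_basicNhd {A B : 𝒜} {m : ℕ} : Sum.inr B ∈ basicNhd A m ↔ B = A := by
  simp [basicNhd]

@[simp]
theorem inl_mem_basicNhd {A : 𝒜} {m k : ℕ} :
    Sum.inl k ∈ basicNhd A m ↔ k ∈ (A : Set ℕ) \ Iio m := by
  simp [basicNhd]

theorem isOpen_basicNhd (A : 𝒜) (m : ℕ) : IsOpen (basicNhd A m) := by
  intro B hB
  rw [inr_mem_basicNhd] at hB
  subst hB
  refine (finite_Iio m).subset fun k ⟨hkA, hk⟩ => ?_
  by_contra hkm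
  exact hk (inl_mem_basicNhd.2 ⟨hkA, hkm⟩)

theorem exists_basicNhd_subset {W : Set (PsiSpace 𝒜)} (hW : IsOpen W) {A : 𝒜}
    (hA : Sum.inr A ∈ W) : ∃ m, basicNhd A m ⊆ W := by
  obtain ⟨m, hm⟩ := (hW A hA).bddAbove
  refine ⟨m + 1, ?_⟩
  rintro (k | B) hx
  · obtain ⟨hkA, hkm⟩ := inl_mem_basicNhd.1 hx
    by_contra hkW
    exact hkm (Nat.lt_succ_of_le (hm ⟨hkA, hkW⟩))
  · rwa [inr_mem_basicNhd.1 hx]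

theorem inter_sdiff_Iio_nonempty_of_basicNhd {A B : 𝒜} (hA : (A : Set ℕ).Infinite)
    {m m' : ℕ} (h : (basicNhd A m ∩ basicNhd B m').Nonempty) :
    (((A : Set ℕ) \ Iio m) ∩ ((B : Set ℕ) \ Iio m')).Nonempty := by
  obtain ⟨k | C, hA', hB'⟩ := h
  · exact ⟨k, inl_mem_basicNhd.1 hA', inl_mem_basicNhd.1 hB'⟩
  · rw [inr_mem_basicNhd] at hA' hB'
    subst hA' hB'
    obtain ⟨k, hkA, hk⟩ := (hA.sdiff (finite_Iio (max m m'))).nonempty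
    exact ⟨k, ⟨hkA, fun h => hk (mem_Iio.2 (lt_max_of_lt_left h))⟩,
      ⟨hkA, fun h => hk (mem_Iio.2 (lt_max_of_lt_right h))⟩⟩

def basicCover (f : 𝒜 → ℕ) : Set (Set (PsiSpace 𝒜)) :=
  range (fun A => basicNhd A (f A)) ∪ range (fun k : ℕ => {Sum.inl k})

theorem isOpen_of_mem_basicCover (f : 𝒜 → ℕ) : ∀ W ∈ basicCover f, IsOpen W := by
  rintro _ (⟨A, rfl⟩ | ⟨k, rfl⟩)
  · exact isOpen_basicNhd A (f A)
  · intro B hB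
    simp at hB

theorem sUnion_basicCover (f : 𝒜 → ℕ) : ⋃₀ basicCover f = univ := by
  refine eq_univ_of_forall ?_
  rintro (k | A)
  · exact ⟨{Sum.inl k}, Or.inr ⟨k, rfl⟩, rfl⟩
  · exact ⟨basicNhd A (f A), Or.inl ⟨A, rfl⟩, inr_mem_basicNhd.2 rfl⟩

theorem eq_basicNhd_of_inr_mem {f : 𝒜 → ℕ} {W : Set (PsiSpace 𝒜)} (hW : W ∈ basicCover f)
    {A : 𝒜} (hA : Sum.inr A ∈ W) : W = basicNhd A (f A) := by
  rcases hW with ⟨B, rfl⟩ | ⟨k, rfl⟩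
  · rw [inr_mem_basicNhd.1 hA]
  · simp at hA

theorem exists_finset_of_mem_basicCover (hinf : ∀ A : 𝒜, (A : Set ℕ).Infinite) {f : 𝒜 → ℕ}
    {V : Set (PsiSpace 𝒜)} (hV : V ∈ basicCover f) :
    ∃ F : Finset 𝒜, ∀ A : 𝒜, (basicNhd A (f A) ∩ V).Nonempty →
      (((A : Set ℕ) \ Iio (f A)) ∩ ⋃ B ∈ F, ((B : Set ℕ) \ Iio (f B))).Nonempty := by
  rcases hV with ⟨B, rfl⟩ | ⟨k, rfl⟩
  · refine ⟨{B}, fun A hAB => ?_⟩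
    simpa using inter_sdiff_Iio_nonempty_of_basicNhd (hinf A) hAB
  · have tail_of_meets : ∀ A : 𝒜, (basicNhd A (f A) ∩ {Sum.inl k}).Nonempty →
        k ∈ (A : Set ℕ) \ Iio (f A) := by
      rintro A ⟨x, hx, rfl⟩
      exact inl_mem_basicNhd.1 hx
    by_cases hk : ∃ B : 𝒜, k ∈ (B : Set ℕ) \ Iio (f B)
    · obtain ⟨B, hB⟩ := hk
      refine ⟨{B}, fun A hA => ⟨k, tail_of_meets A hA, ?_⟩⟩
      simpa using hB
    · exact ⟨∅, fun A hA => absurd ⟨A, tail_of_meets A hA⟩ hk⟩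

theorem exists_finset_of_finite_subset_basicCover (hinf : ∀ A : 𝒜, (A : Set ℕ).Infinite)
    {f : 𝒜 → ℕ} {ℱ : Set (Set (PsiSpace 𝒜))} (hsub : ℱ ⊆ basicCover f) (hfin : ℱ.Finite) :
    ∃ F : Finset 𝒜, ∀ A : 𝒜, Sum.inr A ∈ starSet (⋃₀ ℱ) (basicCover f) →
      (((A : Set ℕ) \ Iio (f A)) ∩ ⋃ B ∈ F, ((B : Set ℕ) \ Iio (f B))).Nonempty := by
  choose! G hG using fun V (hV : V ∈ ℱ) => exists_finset_of_mem_basicCover hinf (hsub hV)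
  refine ⟨hfin.toFinset.biUnion G, ?_⟩
  rintro A ⟨W, ⟨hW, x, hxW, V, hVℱ, hxV⟩, hAW⟩
  rw [eq_basicNhd_of_inr_mem hW hAW] at hxW
  obtain ⟨k, hkA, hkG⟩ := hG V hVℱ A ⟨x, hxW, hxV⟩
  obtain ⟨B, hBG, hkB⟩ := mem_iUnion₂.1 hkG
  exact ⟨k, hkA, mem_iUnion₂.2 ⟨B, Finset.mem_biUnion.2 ⟨V, hfin.mem_toFinset.2 hVℱ, hBG⟩, hkB⟩⟩

theorem starMengerCondition_of_starMenger (hinf : ∀ A : 𝒜, (A : Set ℕ).Infinite)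
    (h : StarMenger (PsiSpace 𝒜)) : StarMengerCondition 𝒜 := by
  intro f
  obtain ⟨ℱ, hℱ, hcov⟩ := h (fun n => basicCover (f · n))
    (fun _ => isOpen_of_mem_basicCover _) (fun _ => sUnion_basicCover _)
  choose F hF using fun n => exists_finset_of_finite_subset_basicCover hinf (hℱ n).1 (hℱ n).2
  refine ⟨F, fun A => ?_⟩
  obtain ⟨n, hn⟩ := mem_iUnion.1 (hcov ▸ mem_univ (Sum.inr A))
  exact ⟨n, hF n A hn⟩

theorem starMenger_of_starMengerCondition (h : StarMengerCondition 𝒜) :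
    StarMenger (PsiSpace 𝒜) := by
  intro 𝒰 hopen hcov
  choose W hW𝒰 hxW using fun n => sUnion_eq_univ_iff.1 (hcov n)
  choose m hm using fun (A : 𝒜) n =>
    exists_basicNhd_subset (hopen n _ (hW𝒰 n (Sum.inr A))) (hxW n (Sum.inr A))
  obtain ⟨F, hF⟩ := h m
  refine ⟨fun n => insert (W n (Sum.inl n)) ((fun B => W n (Sum.inr B)) '' F n),
    fun n => ⟨?_, ((F n).finite_toSet.image _).insert _⟩, eq_univ_of_forall ?_⟩
  · rintro _ (rfl | ⟨B, -, rfl⟩) <;> exact hW𝒰 _ _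
  rintro (k | A)
  · exact mem_iUnion.2 ⟨k, mem_starSet (hW𝒰 k _) (hxW k _)
      ⟨_, hxW k _, mem_sUnion_of_mem (hxW k _) (mem_insert _ _)⟩⟩
  · obtain ⟨n, k, hkA, hkF⟩ := hF A
    obtain ⟨B, hB, hkB⟩ := mem_iUnion₂.1 hkF
    refine mem_iUnion.2 ⟨n, mem_starSet (hW𝒰 n _) (hxW n _)
      ⟨Sum.inl k, hm A n (inl_mem_basicNhd.2 hkA), ?_⟩⟩
    exact mem_sUnion_of_mem (hm B n (inl_mem_basicNhd.2 hkB)) (mem_insert_of_mem _ ⟨B, hB, rfl⟩)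

end PsiSpace

/-- combinatorial characterization of star-Menger Ψ-spaces. -/
theorem starMenger_psiSpace_iff (𝒜 : Set (Set ℕ)) (had : AlmostDisjoint 𝒜) :
    StarMenger (PsiSpace 𝒜) ↔
      ∀ f : 𝒜 → ℕ → ℕ, ∃ ℱ : ℕ → Finset 𝒜, ∀ A : 𝒜, ∃ n : ℕ,
        (((A : Set ℕ) \ Set.Iio (f A n)) ∩
          ⋃ B ∈ ℱ n, ((B : Set ℕ) \ Set.Iio (f B n))).Nonempty :=
  ⟨PsiSpace.starMengerCondition_of_starMenger fun A => had.1 A A.2,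
    PsiSpace.starMenger_of_starMengerCondition⟩
end

section
/- Let 𝒜 ⊆ P(ℕ) be an almost disjoint family of cardinality κ ≥ 𝔡 with cof([κ]^ℵ₀) = κ. Then the Isbell–Mrówka space Ψ(𝒜) is not star-Menger. Equivalently (via the combinatorial characterization): there is a function A ↦ f_A from 𝒜 to ℕ^ℕ such that for all finite ℱ₁, ℱ₂, … ⊆ 𝒜 there exists A ∈ 𝒜 with (A \ f_A(n)) ∩ ⋃_{B∈ℱ_n}(B \ f_B(n)) = ∅ for all n. -/
open Set Filter

universe u

/-!
A single point `A ∈ 𝒜` can code a whole sequence `ℱ₀, ℱ₁, …` of finite subsets of `𝒜`: the union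
`⋃ ℱₙ` lies in one of `κ` sets of a cofinal family in `[𝒜]^ℵ₀`, and in a fixed enumeration of that
set the positions of the members of `ℱₙ` are bounded by one of `𝔡 ≤ κ` everywhere-dominating
functions `d`. Since `κ · κ = κ`, each of these `κ` codes can be given to uncountably many `A`, so
every sequence `(ℱₙ)` is coded by some `A ∉ ⋃ ℱₙ`. Choosing `f_A(n)` above `max (A ∩ B)` for the
finitely many `B` guessed by the code of `A` at level `n` makes the tail `A \ f_A(n)` disjoint from
the tails of all `B ∈ ℱₙ`. In `Ψ(𝒜)`, the covers by the neighbourhoods `{A} ∪ (A \ f_A(n))` then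
admit no finite selections whose stars reach the point `A` coding them.
-/

open Cardinal

theorem exists_cofinal_mk_eq_poCof (α : Type u) [Preorder α] :
    ∃ S : Set α, (∀ a, ∃ b ∈ S, a ≤ b) ∧ #S = poCof α :=
  csInf_mem (s := {c | ∃ S : Set α, (∀ a, ∃ b ∈ S, a ≤ b) ∧ #S = c})
    ⟨_, univ, fun a => ⟨a, trivial, le_rfl⟩, rfl⟩

theorem exists_eventuallyDominating_mk_eq_dNum :
    ∃ D : Set (ℕ → ℕ), (∀ g : ℕ → ℕ, ∃ d ∈ D, ∀ᶠ n in atTop, g n ≤ d n) ∧ #D = dNum :=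
  csInf_mem
    (s := {c | ∃ D : Set (ℕ → ℕ), (∀ g : ℕ → ℕ, ∃ d ∈ D, ∀ᶠ n in atTop, g n ≤ d n) ∧ #D = c})
    ⟨_, univ, fun g => ⟨g, trivial, Eventually.of_forall fun _ => le_rfl⟩, rfl⟩

theorem exists_forall_eventually_lt (u : ℕ → ℕ → ℕ) :
    ∃ g : ℕ → ℕ, ∀ i, ∀ᶠ n in atTop, u i n < g n := by
  refine ⟨fun n => (Finset.range (n + 1)).sup (fun i => u i n) + 1, fun i => ?_⟩
  filter_upwards [eventually_ge_atTop i] with n hn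
  exact Nat.lt_succ_of_le (Finset.le_sup (f := fun i => u i n) (by simpa [Nat.lt_succ_iff]))

theorem aleph0_lt_dNum : ℵ₀ < dNum := by
  obtain ⟨D, hD, hcard⟩ := exists_eventuallyDominating_mk_eq_dNum
  rw [← not_le, ← hcard, mk_le_aleph0_iff, countable_coe_iff]
  intro hcount
  obtain ⟨u, rfl⟩ := hcount.exists_eq_range (let ⟨d, hd, _⟩ := hD 0; ⟨d, hd⟩)
  obtain ⟨g, hg⟩ := exists_forall_eventually_lt u
  obtain ⟨_, ⟨i, rfl⟩, hgu⟩ := hD g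
  obtain ⟨n, hlt, hle⟩ := ((hg i).and hgu).exists
  exact (hlt.trans_le hle).false

theorem exists_dominating_mk_le_dNum :
    ∃ D : Set (ℕ → ℕ), #D ≤ dNum ∧ ∀ g : ℕ → ℕ, ∃ d ∈ D, g ≤ d := by
  obtain ⟨D₀, hD₀, hcard⟩ := exists_eventuallyDominating_mk_eq_dNum
  refine ⟨range fun p : D₀ × ℕ => fun n => (p.1 : ℕ → ℕ) n + p.2, ?_, fun g => ?_⟩
  · calc #(range fun p : D₀ × ℕ => fun n => (p.1 : ℕ → ℕ) n + p.2)
        ≤ #(D₀ × ℕ) := mk_range_le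
      _ = dNum := by
        rw [← mul_def, hcard, mk_nat,
          Cardinal.mul_eq_left aleph0_lt_dNum.le aleph0_lt_dNum.le aleph0_ne_zero]
  · obtain ⟨d, hd, hgd⟩ := hD₀ g
    obtain ⟨N, hN⟩ := eventually_atTop.mp hgd
    refine ⟨_, ⟨(⟨d, hd⟩, (Finset.range N).sup g), rfl⟩, fun n => ?_⟩
    rcases le_or_gt N n with h | h
    · exact (hN n h).trans (Nat.le_add_right _ _)
    · exact (Finset.le_sup (Finset.mem_range.mpr h)).trans (Nat.le_add_left _ _)

theorem exists_cofinal_enumerations_mk_le_ctblCof (X : Type u) [Infinite X] :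
    ∃ S : Set (ℕ → X), #S ≤ ctblCof X ∧
      ∀ C : Set X, C.Countable → ∃ E ∈ S, C ⊆ range E := by
  obtain ⟨S₀, hS₀, hcard⟩ := exists_cofinal_mk_eq_poCof {A : Set X // A.Countable ∧ A.Infinite}
  choose E hE using fun c : {A : Set X // A.Countable ∧ A.Infinite} =>
    c.2.1.exists_eq_range c.2.2.nonempty
  refine ⟨range fun c : S₀ => E c, mk_range_le.trans hcard.le, fun C hC => ?_⟩
  have hinf : (C ∪ range (Infinite.natEmbedding X)).Infinite :=
    (infinite_range_of_injective (Infinite.natEmbedding X).injective).mono subset_union_right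
  obtain ⟨c, hc, hCc⟩ := hS₀ ⟨_, hC.union (countable_range _), hinf⟩
  exact ⟨E c, ⟨⟨c, hc⟩, rfl⟩, fun x hx => hE c ▸ hCc (Or.inl hx)⟩

theorem exists_forall_not_countable_preimage {X T : Type u} [Nonempty T]
    (hX : ℵ₀ < #X) (hT : #T ≤ #X) : ∃ π : X → T, ∀ t, ¬ (π ⁻¹' {t}).Countable := by
  obtain ⟨e⟩ : Nonempty (X ≃ X × T) := by
    rw [← Cardinal.eq, ← mul_def, Cardinal.mul_eq_left hX.le hT (mk_ne_zero T)]
  refine ⟨fun x => (e x).2, fun t hcount => hX.not_ge ?_⟩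
  calc #X = #((fun x => e.symm (x, t)) '' univ) := by
        rw [mk_image_eq fun x y h => by simpa using h, mk_univ]
    _ ≤ #((fun x => (e x).2) ⁻¹' {t}) := mk_le_mk_of_subset (by rintro _ ⟨x, -, rfl⟩; simp)
    _ ≤ ℵ₀ := mk_le_aleph0_iff.mpr hcount.to_subtype

def CapturesFinsetSeqs {X : Type*} (Φ : X → ℕ → Finset X) : Prop :=
  ∀ ℱ : ℕ → Finset X, ∃ A, ∀ n, A ∉ ℱ n ∧ ℱ n ⊆ Φ A n

theorem exists_capturesFinsetSeqs (X : Type) (hd : dNum ≤ #X) (hcof : ctblCof X ≤ #X) :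
    ∃ Φ : X → ℕ → Finset X, CapturesFinsetSeqs Φ := by
  classical
  have hX : ℵ₀ < #X := aleph0_lt_dNum.trans_le hd
  have : Infinite X := infinite_iff.mpr hX.le
  obtain ⟨S, hScard, hS⟩ := exists_cofinal_enumerations_mk_le_ctblCof X
  obtain ⟨D, hDcard, hD⟩ := exists_dominating_mk_le_dNum
  have : Nonempty S := let ⟨E, hE, _⟩ := hS ∅ countable_empty; ⟨⟨E, hE⟩⟩
  have : Nonempty D := let ⟨d, hd, _⟩ := hD 0; ⟨⟨d, hd⟩⟩
  have hSD : #(S × D) ≤ #X := by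
    rw [← mul_def]
    exact (mul_le_mul' (hScard.trans hcof) (hDcard.trans hd)).trans (mul_eq_self hX.le).le
  obtain ⟨π, hπ⟩ := exists_forall_not_countable_preimage hX hSD
  -- `π A = (E, d)` is the code carried by `A`, and `Φ A n` lists `E 0, …, E (d n)`.
  refine ⟨fun A n => (Finset.range ((π A).2.1 n + 1)).image (π A).1.1, fun ℱ => ?_⟩
  have hC : (⋃ n, (ℱ n : Set X)).Countable := countable_iUnion fun n => (ℱ n).countable_toSet
  obtain ⟨E, hES, hCE⟩ := hS _ hC
  obtain ⟨d, hdD, hgd⟩ := hD fun n => (ℱ n).sup (Function.invFun E)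
  obtain ⟨A, hAπ, hAC⟩ := not_subset.mp fun h => hπ (⟨E, hES⟩, ⟨d, hdD⟩) (hC.mono h)
  simp only [mem_preimage, mem_singleton_iff] at hAπ
  refine ⟨A, fun n => ⟨fun hA => hAC (mem_iUnion_of_mem n hA), fun B hB => ?_⟩⟩
  dsimp only
  rw [hAπ, Finset.mem_image]
  exact ⟨Function.invFun E B, Finset.mem_range_succ_iff.mpr ((Finset.le_sup hB).trans (hgd n)),
    Function.invFun_eq (hCE (mem_iUnion_of_mem n hB))⟩

theorem CapturesFinsetSeqs.exists_forall_disjoint_tails {ι : Type*} {a : ι → Set ℕ}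
    (ha : Pairwise fun i j => (a i ∩ a j).Finite) {Φ : ι → ℕ → Finset ι}
    (hΦ : CapturesFinsetSeqs Φ) :
    ∃ f : ι → ℕ → ℕ, ∀ ℱ : ℕ → Finset ι, ∃ i, ∀ n,
      Disjoint (a i \ Iio (f i n)) (⋃ j ∈ ℱ n, a j \ Iio (f j n)) := by
  have hbound : ∀ i j, ∃ N, i ≠ j → a i ∩ a j ⊆ Iio N := by
    intro i j
    by_cases hij : i = j
    · exact ⟨0, fun h => (h hij).elim⟩
    · obtain ⟨N, hN⟩ := (ha hij).bddAbove
      exact ⟨N + 1, fun _ x hx => Nat.lt_succ_of_le (hN hx)⟩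
  choose m hm using hbound
  refine ⟨fun i n => (Φ i n).sup (m i), fun ℱ => ?_⟩
  obtain ⟨i, hi⟩ := hΦ ℱ
  refine ⟨i, fun n => disjoint_iUnion₂_right.mpr fun j hj => disjoint_left.mpr ?_⟩
  rintro x ⟨hxi, hxf⟩ ⟨hxj, -⟩
  have hij : i ≠ j := fun h => (hi n).1 (h ▸ hj)
  exact hxf (mem_Iio.mpr ((hm i j hij ⟨hxi, hxj⟩).trans_le (Finset.le_sup ((hi n).2 hj))))

namespace PsiSpace

variable {𝒜 : Set (Set ℕ)}

def basicNbhd (A : 𝒜) (k : ℕ) : Set (PsiSpace 𝒜) :=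
  insert (Sum.inr A) (Sum.inl '' ((A : Set ℕ) \ Iio k))

@[simp]
theorem inr_mem_basicNbhd_iff {A B : 𝒜} {k : ℕ} : Sum.inr B ∈ basicNbhd A k ↔ B = A := by
  simp [basicNbhd]

@[simp]
theorem inl_mem_basicNbhd_iff {A : 𝒜} {k m : ℕ} :
    Sum.inl m ∈ basicNbhd A k ↔ m ∈ (A : Set ℕ) \ Iio k := by
  simp [basicNbhd]

theorem isOpen_basicNbhd (A : 𝒜) (k : ℕ) : IsOpen (basicNbhd A k) := by
  intro B hB
  rw [inr_mem_basicNbhd_iff.mp hB]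
  refine (finite_Iio k).subset fun m ⟨hmA, hm⟩ => ?_
  by_contra hmk
  exact hm (inl_mem_basicNbhd_iff.mpr ⟨hmA, hmk⟩)

theorem isOpen_image_inl (s : Set ℕ) : IsOpen (Sum.inl '' s : Set (PsiSpace 𝒜)) := by
  intro A hA
  simp at hA

theorem injective_basicNbhd (g : 𝒜 → ℕ) : Function.Injective fun A => basicNbhd A (g A) :=
  fun A B h => (inr_mem_basicNbhd_iff (k := g B)).mp <| by
    rw [← show basicNbhd A (g A) = basicNbhd B (g B) from h]
    exact mem_insert _ _

theorem disjoint_basicNbhd {A B : 𝒜} {k l : ℕ} (hAB : A ≠ B)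
    (h : Disjoint ((A : Set ℕ) \ Iio k) ((B : Set ℕ) \ Iio l)) :
    Disjoint (basicNbhd A k) (basicNbhd B l) := by
  refine disjoint_left.mpr ?_
  rintro (m | C) hA hB
  · exact disjoint_left.mp h (inl_mem_basicNbhd_iff.mp hA) (inl_mem_basicNbhd_iff.mp hB)
  · exact hAB ((inr_mem_basicNbhd_iff.mp hA).symm.trans (inr_mem_basicNbhd_iff.mp hB))

/-- Only the naturals outside every tail `A \ [0, f A n)` get singletons, so the only member of
the cover containing the point `A` is its neighbourhood `basicNbhd A (f A n)`, and no singleton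
meets it. -/
def tailCover (f : 𝒜 → ℕ → ℕ) (n : ℕ) : Set (Set (PsiSpace 𝒜)) :=
  range (fun A => basicNbhd A (f A n)) ∪
    (fun k => {Sum.inl k}) '' (⋃ A : 𝒜, (A : Set ℕ) \ Iio (f A n))ᶜ

variable (f : 𝒜 → ℕ → ℕ) (n : ℕ)

theorem isOpen_of_mem_tailCover {U : Set (PsiSpace 𝒜)} (hU : U ∈ tailCover f n) : IsOpen U := by
  rcases hU with ⟨A, rfl⟩ | ⟨k, -, rfl⟩
  · exact isOpen_basicNbhd A _
  · simpa using isOpen_image_inl {k}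

theorem sUnion_tailCover : ⋃₀ tailCover f n = Set.univ := by
  refine eq_univ_of_forall ?_
  rintro (k | A)
  · by_cases hk : k ∈ ⋃ A : 𝒜, (A : Set ℕ) \ Iio (f A n)
    · obtain ⟨A, hA⟩ := mem_iUnion.mp hk
      exact ⟨_, Or.inl ⟨A, rfl⟩, inl_mem_basicNbhd_iff.mpr hA⟩
    · exact ⟨_, Or.inr ⟨k, hk, rfl⟩, rfl⟩
  · exact ⟨_, Or.inl ⟨A, rfl⟩, mem_insert _ _⟩

theorem eq_basicNbhd_of_inr_mem {U : Set (PsiSpace 𝒜)} (hU : U ∈ tailCover f n) {A : 𝒜}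
    (hA : Sum.inr A ∈ U) : U = basicNbhd A (f A n) := by
  rcases hU with ⟨B, rfl⟩ | ⟨k, -, rfl⟩
  · rw [inr_mem_basicNbhd_iff.mp hA]
  · simp at hA

end PsiSpace

open PsiSpace in
theorem not_starMenger_psiSpace_of_forall_disjoint_tails {𝒜 : Set (Set ℕ)}
    (hinf : ∀ A ∈ 𝒜, A.Infinite) (f : 𝒜 → ℕ → ℕ)
    (hf : ∀ ℱ : ℕ → Finset 𝒜, ∃ A : 𝒜, ∀ n, Disjoint ((A : Set ℕ) \ Iio (f A n))
      (⋃ B ∈ ℱ n, (B : Set ℕ) \ Iio (f B n))) :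
    ¬ StarMenger (PsiSpace 𝒜) := by
  intro hSM
  obtain ⟨ℱ, hℱ, hcov⟩ :=
    hSM (tailCover f) (fun n _ => isOpen_of_mem_tailCover f n) (sUnion_tailCover f)
  have hfin : ∀ n, {B | basicNbhd B (f B n) ∈ ℱ n}.Finite := fun n =>
    (hℱ n).2.preimage (injective_basicNbhd (f · n)).injOn
  obtain ⟨A, hA⟩ := hf fun n => (hfin n).toFinset
  obtain ⟨n, V, ⟨hV, hVℱ⟩, hAV⟩ := mem_iUnion.mp (hcov ▸ mem_univ (Sum.inr A))
  rw [eq_basicNbhd_of_inr_mem f n hV hAV] at hVℱ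
  obtain ⟨y, hyA, W, hWℱ, hyW⟩ := hVℱ
  refine disjoint_left.mp ?_ hyA hyW
  rcases (hℱ n).1 hWℱ with ⟨B, rfl⟩ | ⟨k, hk, rfl⟩
  · have hAB := disjoint_iUnion₂_right.mp (hA n) B (by simpa using hWℱ)
    refine disjoint_basicNbhd (fun h => ?_) hAB
    subst h
    exact ((hinf A A.2).sdiff (finite_Iio _)).nonempty.ne_empty (disjoint_self.mp hAB)
  · refine disjoint_singleton_right.mpr fun hkA => hk (mem_iUnion.mpr ⟨A, ?_⟩)
    exact inl_mem_basicNbhd_iff.mp hkA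

/-- an almost disjoint family of cardinality `κ ≥ 𝔡` with
`cof([κ]^ℵ₀) = κ` yields a non-star-Menger Ψ-space; equivalently, the negation of the
combinatorial characterization holds. -/
theorem not_starMenger_psiSpace (𝒜 : Set (Set ℕ)) (had : AlmostDisjoint 𝒜)
    (hd : dNum ≤ Cardinal.mk ↥𝒜) (hcof : ctblCof ↥𝒜 = Cardinal.mk ↥𝒜) :
    ¬ StarMenger (PsiSpace 𝒜) ∧
      ∃ f : 𝒜 → ℕ → ℕ, ∀ ℱ : ℕ → Finset 𝒜, ∃ A : 𝒜, ∀ n : ℕ,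
        ((A : Set ℕ) \ Set.Iio (f A n)) ∩
          (⋃ B ∈ ℱ n, ((B : Set ℕ) \ Set.Iio (f B n))) = ∅ := by
  obtain ⟨Φ, hΦ⟩ := exists_capturesFinsetSeqs 𝒜 hd hcof.le
  have hpair : Pairwise fun A B : 𝒜 => ((A : Set ℕ) ∩ B).Finite :=
    fun A B hAB => had.2 A A.2 B B.2 (Subtype.coe_injective.ne hAB)
  obtain ⟨f, hf⟩ := hΦ.exists_forall_disjoint_tails hpair
  refine ⟨not_starMenger_psiSpace_of_forall_disjoint_tails had.1 f hf, f, fun ℱ => ?_⟩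
  simpa only [← disjoint_iff_inter_eq_empty] using hf ℱ
end

section
/- Let 𝒜 ⊆ P(ℕ) be an almost disjoint family of cardinality κ ≥ 𝔟 with cof([κ]^ℵ₀) = κ. Then the Isbell–Mrówka space Ψ(𝒜) is not star-Hurewicz. -/
open Set Filter

universe u

lemma bNum_set_nonempty : { c | ∃ B : Set (ℕ → ℕ),
    (∀ g : ℕ → ℕ, ∃ f ∈ B, ¬ ∀ᶠ n in atTop, f n ≤ g n) ∧ Cardinal.mk B = c }.Nonempty := by
  refine ⟨Cardinal.mk (Set.univ : Set (ℕ → ℕ)), Set.univ, fun g => ⟨fun n => g n + 1, trivial, ?_⟩, rfl⟩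
  intro h
  rcases (Filter.eventually_atTop.mp h) with ⟨n, hn⟩
  simpa using hn n le_rfl

lemma aleph0_lt_bNum : Cardinal.aleph0 < bNum := by
  obtain ⟨B, hBub, hBmk⟩ := csInf_mem bNum_set_nonempty
  rw [bNum, ← hBmk]
  by_contra h
  push_neg at h
  have hcnt : B.Countable := by
    rwa [← Set.countable_coe_iff, ← Cardinal.mk_le_aleph0_iff]
  rcases B.eq_empty_or_nonempty with rfl | hne
  · obtain ⟨f, hf, _⟩ := hBub 0
    exact hf
  · obtain ⟨u, hu⟩ := hcnt.exists_eq_range hne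
    set g : ℕ → ℕ := fun n => (Finset.range (n + 1)).sup (fun k => u k n) with hg
    obtain ⟨f, hfB, hf⟩ := hBub g
    rw [hu] at hfB
    obtain ⟨k, rfl⟩ := hfB
    apply hf
    rw [Filter.eventually_atTop]
    refine ⟨k, fun n hn => ?_⟩
    have hk : k ∈ Finset.range (n + 1) := Finset.mem_range.mpr (Nat.lt_succ_of_le hn)
    exact Finset.le_sup (f := fun k => u k n) hk

lemma core_lemma (𝒜 : Set (Set ℕ)) (had : AlmostDisjoint 𝒜)
    (hb : bNum ≤ Cardinal.mk ↥𝒜) (hcof : ctblCof ↥𝒜 = Cardinal.mk ↥𝒜) :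
    ∃ f : ↥𝒜 → ℕ → ℕ, ∀ G : ℕ → Set ↥𝒜, (∀ n, (G n).Finite) → ∀ g : ℕ → ℕ,
      ∃ A : ↥𝒜, {n | A ∉ G n ∧ g n < f A n ∧
        ∀ B ∈ G n, B ≠ A → ∀ m : ℕ, m ∈ (↑A : Set ℕ) ∩ ↑B → m < f A n}.Infinite := by
  classical
  have hκ : Cardinal.aleph0 < Cardinal.mk ↥𝒜 := lt_of_lt_of_le aleph0_lt_bNum hb
  have hinf : Infinite ↥𝒜 := Cardinal.infinite_iff.mpr hκ.le
  -- cofinal family S with mk S = mk 𝒜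
  have hTne : { c | ∃ S : Set { A : Set ↥𝒜 // A.Countable ∧ A.Infinite },
      (∀ a, ∃ b ∈ S, a ≤ b) ∧ Cardinal.mk S = c }.Nonempty :=
    ⟨_, Set.univ, fun a => ⟨a, trivial, le_rfl⟩, rfl⟩
  obtain ⟨S, hScof, hSmk⟩ := csInf_mem hTne
  have hSmk' : Cardinal.mk ↥S = Cardinal.mk ↥𝒜 := by
    rw [hSmk]; exact hcof
  -- unbounded family Bf with mk Bf = bNum
  obtain ⟨Bf, hBfub, hBfmk⟩ := csInf_mem bNum_set_nonempty
  have hBfmk' : Cardinal.mk ↥Bf = bNum := hBfmk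
  -- equivalence
  have hmk : Cardinal.mk ((↥S × ↥Bf) × ↥𝒜) = Cardinal.mk ↥𝒜 := by
    rw [Cardinal.mk_prod, Cardinal.mk_prod, Cardinal.lift_id, Cardinal.lift_id,
      Cardinal.lift_id, Cardinal.lift_id, hSmk', hBfmk']
    rw [Cardinal.mul_eq_max (le_of_lt hκ) (le_of_lt aleph0_lt_bNum),
      max_eq_left hb]
    rw [Cardinal.mul_eq_max (le_of_lt hκ) (le_of_lt hκ), max_self]
  obtain ⟨e⟩ := Cardinal.eq.mp hmk
  -- enumerations of members of S
  have henum : ∀ K : ↥S, ∃ eK : ℕ → ↥𝒜, (K.1.1 : Set ↥𝒜) = Set.range eK :=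
    fun K => (K.1.2.1).exists_eq_range (K.1.2.2.nonempty)
  choose enum hEnum using henum
  -- finite "forbidden" sets
  set D : ↥𝒜 → ↥S → ℕ → Set ℕ := fun A K j =>
    ⋃ k ∈ Set.Iic j, if enum K k = A then ∅ else ((↑A : Set ℕ) ∩ ↑(enum K k)) with hD
  have hDfin : ∀ A K j, (D A K j).Finite := by
    intro A K j
    apply Set.Finite.biUnion (Set.finite_Iic j)
    intro k _
    split
    · exact Set.finite_empty
    · exact had.2 _ A.2 _ (enum K k).2 (fun hc => by
        exact ‹¬ enum K k = A› (Subtype.ext hc.symm))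
  -- define f
  refine ⟨fun A n => max ((e.symm A).1.2.1 n)
      (sSup (D A (e.symm A).1.1 ((e.symm A).1.2.1 n)) + 1), ?_⟩
  intro G hGfin g
  -- the countable set of guards
  set C : Set ↥𝒜 := ⋃ n, G n with hC
  have hCcnt : C.Countable := Set.countable_iUnion (fun n => (hGfin n).countable)
  set D₀ : Set ↥𝒜 := Set.range (Infinite.natEmbedding ↥𝒜) with hD₀
  have hC' : (C ∪ D₀).Countable := hCcnt.union (Set.countable_range _)
  have hC'inf : (C ∪ D₀).Infinite :=
    Set.Infinite.mono Set.subset_union_right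
      (Set.infinite_range_of_injective (Infinite.natEmbedding ↥𝒜).injective)
  obtain ⟨K0, hK0S, hK0le⟩ := hScof ⟨C ∪ D₀, hC', hC'inf⟩
  set K : ↥S := ⟨K0, hK0S⟩ with hK
  have hCK : C ⊆ K0.1 := Set.Subset.trans Set.subset_union_left hK0le
  -- index function
  have hidx : ∀ B ∈ K0.1, ∃ k, enum K k = B := by
    intro B hB
    have : B ∈ Set.range (enum K) := by rw [← hEnum K]; exact hB
    exact this
  set idx : ↥𝒜 → ℕ := fun B => if h : ∃ k, enum K k = B then h.choose else 0 with hidxdef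
  have hidx' : ∀ B ∈ K0.1, enum K (idx B) = B := by
    intro B hB
    have h := hidx B hB
    simp only [hidxdef, dif_pos h]
    exact h.choose_spec
  -- bound function
  set g' : ℕ → ℕ := fun n => max (g n) (sSup (idx '' G n)) with hg'
  obtain ⟨b0, hb0Bf, hb0⟩ := hBfub g'
  set b : ↥Bf := ⟨b0, hb0Bf⟩ with hbdef
  -- find A outside K0
  have hA : ∃ w : ↥𝒜, e ((K, b), w) ∉ K0.1 := by
    by_contra h
    push_neg at h
    have hinj : Function.Injective (fun w : ↥𝒜 => (⟨e ((K, b), w), h w⟩ : ↥K0.1)) := by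
      intro w1 w2 hw
      have := congrArg Subtype.val hw
      simp only at this
      exact (Prod.mk.injEq _ _ _ _ ▸ (e.injective this)).2
    have hle : Cardinal.mk ↥𝒜 ≤ Cardinal.mk ↥K0.1 := Cardinal.mk_le_of_injective hinj
    have hcnt : Cardinal.mk ↥K0.1 ≤ Cardinal.aleph0 :=
      Cardinal.mk_le_aleph0_iff.mpr (Set.countable_coe_iff.mpr K0.2.1)
    exact absurd (hle.trans hcnt) (not_le.mpr hκ)
  obtain ⟨w, hAw⟩ := hA
  set A : ↥𝒜 := e ((K, b), w) with hAdef
  have hsymm : e.symm A = ((K, b), w) := e.symm_apply_apply _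
  refine ⟨A, ?_⟩
  have hNinf : {n | g' n < b0 n}.Infinite := by
    rw [← Nat.frequently_atTop_iff_infinite]
    rw [Filter.not_eventually] at hb0
    exact hb0.mono (fun n hn => not_le.mp hn)
  apply hNinf.mono
  intro n hn
  simp only [Set.mem_setOf_eq] at hn ⊢
  have hbig : g' n < max (b0 n) (sSup (D A K (b0 n)) + 1) := lt_of_lt_of_le hn (le_max_left _ _)
  refine ⟨?_, ?_, ?_⟩
  · intro hAG
    exact hAw (hCK (Set.mem_iUnion.mpr ⟨n, hAG⟩))
  · rw [hsymm]
    have hgn : g n < b0 n := lt_of_le_of_lt (le_max_left _ _) hn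
    exact lt_of_lt_of_le hgn (le_max_left _ _)
  · intro B hBG hBA m hm
    rw [hsymm]
    have hBK : B ∈ K0.1 := hCK (Set.mem_iUnion.mpr ⟨n, hBG⟩)
    have hidxB : enum K (idx B) = B := hidx' B hBK
    have hidxle : idx B ≤ b0 n := by
      have h1 : idx B ≤ sSup (idx '' G n) :=
        le_csSup ((hGfin n).image idx).bddAbove ⟨B, hBG, rfl⟩
      have h2 : sSup (idx '' G n) ≤ g' n := le_max_right _ _
      omega
    have hmD : m ∈ D A K (b0 n) := by
      rw [hD]
      refine Set.mem_biUnion (Set.mem_Iic.mpr hidxle) ?_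
      rw [if_neg (by rw [hidxB]; exact hBA)]
      rw [hidxB]
      exact hm
    have : m ≤ sSup (D A K (b0 n)) := le_csSup (hDfin A K (b0 n)).bddAbove hmD
    exact lt_of_lt_of_le (Nat.lt_succ_of_le this) (le_max_right _ _)

lemma psi_isOpen_iff (𝒜 : Set (Set ℕ)) (U : Set (PsiSpace 𝒜)) :
    IsOpen U ↔ ∀ A : 𝒜, Sum.inr A ∈ U → { n : ℕ | n ∈ (A : Set ℕ) ∧ Sum.inl n ∉ U }.Finite :=
  Iff.rfl

/-- an almost disjoint family of cardinality `κ ≥ 𝔟` with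
`cof([κ]^ℵ₀) = κ` yields a non-star-Hurewicz Ψ-space. -/
theorem not_starHurewicz_psiSpace (𝒜 : Set (Set ℕ)) (had : AlmostDisjoint 𝒜)
    (hb : bNum ≤ Cardinal.mk ↥𝒜) (hcof : ctblCof ↥𝒜 = Cardinal.mk ↥𝒜) :
    ¬ StarHurewicz (PsiSpace 𝒜) := by
  classical
  intro hSH
  obtain ⟨f, hf⟩ := core_lemma 𝒜 had hb hcof
  -- basic open sets
  set V : ↥𝒜 → ℕ → Set (PsiSpace 𝒜) := fun A n =>
    {x | x = Sum.inr A ∨ ∃ m : ℕ, x = Sum.inl m ∧ m ∈ (↑A : Set ℕ) ∧ f A n < m} with hV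
  set 𝒰 : ℕ → Set (Set (PsiSpace 𝒜)) := fun n =>
    (Set.range fun A => V A n) ∪ (Set.range fun m : ℕ => ({Sum.inl m} : Set (PsiSpace 𝒜))) with h𝒰
  -- membership facts
  have hVrA : ∀ (A B : ↥𝒜) (n : ℕ), Sum.inr B ∈ V A n → B = A := by
    intro A B n hB
    rcases hB with h | ⟨m, hm, _⟩
    · exact Sum.inr_injective h
    · exact absurd hm (by simp)
  have hVlm : ∀ (A : ↥𝒜) (n m : ℕ), Sum.inl m ∈ V A n → m ∈ (↑A : Set ℕ) ∧ f A n < m := by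
    intro A n m hm
    rcases hm with h | ⟨m', hm', h1, h2⟩
    · exact absurd h (by simp)
    · rcases Sum.inl_injective hm' with rfl
      exact ⟨h1, h2⟩
  have hopen : ∀ n, ∀ U ∈ 𝒰 n, IsOpen U := by
    intro n U hU
    rcases hU with ⟨A, rfl⟩ | ⟨m, rfl⟩
    · rw [psi_isOpen_iff]
      intro B hB
      rcases hVrA A B n hB with rfl
      apply (Set.finite_Iic (f B n)).subset
      rintro m ⟨hmB, hmV⟩
      simp only [Set.mem_Iic]
      by_contra hlt
      exact hmV (Or.inr ⟨m, rfl, hmB, by omega⟩)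
    · rw [psi_isOpen_iff]
      intro B hB
      exact absurd hB (by simp)
  have hcover : ∀ n, ⋃₀ 𝒰 n = Set.univ := by
    intro n
    apply Set.eq_univ_of_forall
    intro x
    rcases x with m | A
    · exact ⟨{Sum.inl m}, Or.inr ⟨m, rfl⟩, rfl⟩
    · exact ⟨V A n, Or.inl ⟨A, rfl⟩, Or.inl rfl⟩
  obtain ⟨ℱ, h1, h2⟩ := hSH 𝒰 hopen hcover
  -- extract data
  set G : ℕ → Set ↥𝒜 := fun n => {A | Sum.inr A ∈ ⋃₀ ℱ n} with hG
  have hGfin : ∀ n, (G n).Finite := by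
    intro n
    have : G n ⊆ ⋃ U ∈ ℱ n, {A : ↥𝒜 | Sum.inr A ∈ U} := by
      rintro A ⟨U, hU, hAU⟩
      exact Set.mem_biUnion hU hAU
    apply Set.Finite.subset _ this
    apply Set.Finite.biUnion (h1 n).2
    intro U hU
    apply Set.Subsingleton.finite
    intro B1 hB1 B2 hB2
    rcases (h1 n).1 hU with ⟨A, rfl⟩ | ⟨m, rfl⟩
    · rw [hVrA A B1 n hB1, hVrA A B2 n hB2]
    · exact absurd hB1 (by simp)
  set T : ℕ → Set ℕ := fun n => {m | ({Sum.inl m} : Set (PsiSpace 𝒜)) ∈ ℱ n} with hT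
  have hTfin : ∀ n, (T n).Finite := by
    intro n
    apply Set.Finite.of_finite_image (f := fun m => ({Sum.inl m} : Set (PsiSpace 𝒜)))
    · apply (h1 n).2.subset
      rintro U ⟨m, hm, rfl⟩
      exact hm
    · intro m1 _ m2 _ h
      have : (Sum.inl m1 : PsiSpace 𝒜) ∈ ({Sum.inl m2} : Set (PsiSpace 𝒜)) := by
        have h' : ({Sum.inl m1} : Set (PsiSpace 𝒜)) = {Sum.inl m2} := h
        rw [← h']; rfl
      exact Sum.inl_injective (Set.mem_singleton_iff.mp this)
  set g : ℕ → ℕ := fun n => sSup (T n) with hg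
  obtain ⟨A, hAinf⟩ := hf G hGfin g
  have h2A := h2 (Sum.inr A)
  rw [Filter.eventually_atTop] at h2A
  obtain ⟨n₀, hn₀⟩ := h2A
  -- pick a good n ≥ n₀
  have : ∃ n, n ∈ {n | A ∉ G n ∧ g n < f A n ∧
      ∀ B ∈ G n, B ≠ A → ∀ m : ℕ, m ∈ (↑A : Set ℕ) ∩ ↑B → m < f A n} ∧ n₀ ≤ n := by
    by_contra h
    push_neg at h
    apply hAinf
    apply (Set.finite_Iio n₀).subset
    intro n hn
    exact Set.mem_Iio.mpr (h n hn)
  obtain ⟨n, ⟨hAG, hgn, hkey⟩, hn⟩ := this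
  have hstar := hn₀ n hn
  obtain ⟨U, ⟨hU𝒰, hUne⟩, hAU⟩ := hstar
  rcases hU𝒰 with ⟨B, rfl⟩ | ⟨m, rfl⟩
  · rcases hVrA B A n hAU with rfl
    obtain ⟨x, hxV, W, hW, hxW⟩ := hUne
    rcases (h1 n).1 hW with ⟨B', rfl⟩ | ⟨m, rfl⟩
    · -- W = V B' n
      have hB'G : B' ∈ G n := ⟨V B' n, hW, Or.inl rfl⟩
      rcases x with m | C
      · -- x = inl m
        obtain ⟨hmA, hfA⟩ := hVlm A n m hxV
        obtain ⟨hmB', _⟩ := hVlm B' n m hxW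
        have hB'A : B' ≠ A := fun h => hAG (h ▸ hB'G)
        exact absurd (hkey B' hB'G hB'A m ⟨hmA, hmB'⟩) (by omega)
      · -- x = inr C
        rcases hVrA A C n hxV with rfl
        rcases hVrA B' C n hxW with rfl
        exact hAG hB'G
    · -- W = {inl m}
      have hmT : m ∈ T n := hW
      have hgm : m ≤ g n := le_csSup (hTfin n).bddAbove hmT
      rcases Set.mem_singleton_iff.mp hxW with rfl
      obtain ⟨_, hfA⟩ := hVlm A n m hxV
      omega
  · exact absurd hAU (by simp)
end

section
/- If 𝔟 = 𝔠, then every star-Menger Isbell–Mrówka space Ψ(𝒜) is strongly star-Hurewicz. (Specifically: every star-Menger Ψ-space has |𝒜| < 𝔠, using cof(Fin(𝔠)^ℕ) = 𝔠, and every Ψ-space with |𝒜| < 𝔟 is strongly star-Hurewicz.) -/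
open Set Filter

universe u

/-!
If `|𝒜| < 𝔟`, pick for each `A ∈ 𝒜` and `n` a point `f_A(n) ∈ ℕ` in a member of the `n`-th cover
containing `A`; fewer than `𝔟` functions `f_A` are eventually dominated by a single `g`, and the
finite sets `{0, …, max (g n) n} ⊆ ℕ` witness strong star-Hurewiczness.

If `|𝒜| = 𝔠`, `Ψ(𝒜)` is not star-Menger: there are only `𝔠` sequences `σ` of finite subsets of
`Ψ(𝒜)`, so one can attach to each `σ` its own `A_σ ∈ 𝒜` never occurring in `σ`. Shrinking the
neighbourhood of `A_σ` in the `n`-th cover by the finitely many points of `A_σ` lying in `σ n` or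
in another member of `σ n` (almost disjointness) keeps `A_σ` outside the stars of the selection
centred at `σ`. Hence star-Menger forces `|𝒜| < 𝔠 = 𝔟`.
-/

open scoped Cardinal

lemma subset_starSet {X : Type*} {S : Set X} {𝒰 : Set (Set X)} (h𝒰 : ⋃₀ 𝒰 = univ) :
    S ⊆ starSet S 𝒰 := by
  intro x hx
  obtain ⟨U, hU, hxU⟩ := mem_sUnion.mp (h𝒰 ▸ mem_univ x)
  exact ⟨U, ⟨hU, x, hxU, hx⟩, hxU⟩

lemma mem_starSet_of_mem {X : Type*} {S U : Set X} {𝒰 : Set (Set X)} {x y : X}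
    (hU : U ∈ 𝒰) (hx : x ∈ U) (hy : y ∈ U) (hyS : y ∈ S) : x ∈ starSet S 𝒰 :=
  ⟨U, ⟨hU, y, hy, hyS⟩, hx⟩

lemma exists_eventually_le_of_mk_lt_bNum {ι : Type} (f : ι → ℕ → ℕ) (h : #ι < bNum) :
    ∃ g : ℕ → ℕ, ∀ i, ∀ᶠ n in atTop, f i n ≤ g n := by
  by_contra! hunb
  have : bNum ≤ #(range f) := csInf_le' ⟨range f, fun g ↦ by
    obtain ⟨i, hi⟩ := hunb g
    exact ⟨f i, mem_range_self i, fun hle ↦ hi (hle.mono fun n hn ↦ not_lt.mpr hn)⟩, rfl⟩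
  exact (this.trans Cardinal.mk_range_le).not_gt h

theorem exists_injective_forall_notMem {T α β : Type*} [Uncountable β] (j : T × β ↪ α)
    (C : T → Set α) (hC : ∀ t, (C t).Countable) :
    ∃ s : T → α, Function.Injective s ∧ ∀ t, s t ∉ C t := by
  have hb : ∀ t, ∃ b, j (t, b) ∉ C t := fun t ↦ by
    by_contra! h
    exact not_countable (α := β) <| countable_univ_iff.mp <|
      MapsTo.countable_of_injOn (fun b _ ↦ h b)
        (fun _ _ _ _ h ↦ (Prod.ext_iff.mp (j.injective h)).2) (hC t)
  choose b hb using hb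
  exact ⟨fun t ↦ j (t, b t), fun t t' h ↦ (Prod.ext_iff.mp (j.injective h)).1, hb⟩

lemma mk_seq_finset_prod_baire {α : Type} (h : #α = 𝔠) :
    #((ℕ → Finset (ℕ ⊕ α)) × (ℕ → ℕ)) = 𝔠 := by
  have : Infinite α := Cardinal.infinite_iff.mpr (h ▸ Cardinal.aleph0_le_continuum)
  simp [Cardinal.mk_finset_of_infinite, h]

namespace PsiSpace

variable {𝒜 : Set (Set ℕ)}

lemma exists_inl_mem_of_isOpen {A : 𝒜} (hA : (A : Set ℕ).Infinite) {U : Set (PsiSpace 𝒜)}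
    (hU : IsOpen U) (hAU : Sum.inr A ∈ U) : ∃ k, Sum.inl k ∈ U := by
  obtain ⟨k, hkA, hkU⟩ := (hA.sdiff (hU A hAU)).nonempty
  exact ⟨k, by_contra fun h ↦ hkU ⟨hkA, h⟩⟩

theorem stronglyStarHurewicz_of_mk_lt_bNum (h𝒜 : ∀ A ∈ 𝒜, A.Infinite) (h : #𝒜 < bNum) :
    StronglyStarHurewicz (PsiSpace 𝒜) := by
  intro 𝒰 hopen hcov
  have hU : ∀ (A : 𝒜) n, ∃ U ∈ 𝒰 n, Sum.inr A ∈ U := fun A n ↦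
    mem_sUnion.mp (hcov n ▸ mem_univ _)
  choose U hU𝒰 hAU using hU
  have hf : ∀ (A : 𝒜) n, ∃ k, Sum.inl k ∈ U A n := fun A n ↦
    exists_inl_mem_of_isOpen (h𝒜 A A.2) (hopen n _ (hU𝒰 A n)) (hAU A n)
  choose f hf using hf
  obtain ⟨g, hg⟩ := exists_eventually_le_of_mk_lt_bNum f h
  refine ⟨fun n ↦ Sum.inl '' Iic (max (g n) n), fun n ↦ (finite_Iic _).image _, ?_⟩
  rintro (k | A)
  · filter_upwards [eventually_ge_atTop k] with n hn
    exact subset_starSet (hcov n) ⟨k, le_max_of_le_right hn, rfl⟩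
  · filter_upwards [hg A] with n hn
    exact mem_starSet_of_mem (hU𝒰 A n) (hAU A n) (hf A n) ⟨f A n, le_max_of_le_left hn, rfl⟩

/-- The points of `A` through which a neighbourhood of `A` can meet a neighbourhood centred
in `S`. -/
def trace (A : 𝒜) (S : Set (PsiSpace 𝒜)) : Set ℕ :=
  {m ∈ (A : Set ℕ) | Sum.inl m ∈ S ∨ ∃ B : 𝒜, B ≠ A ∧ Sum.inr B ∈ S ∧ m ∈ (B : Set ℕ)}

lemma trace_finite (had : AlmostDisjoint 𝒜) (A : 𝒜) {S : Set (PsiSpace 𝒜)} (hS : S.Finite) :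
    (trace A S).Finite := by
  have hB : {B : 𝒜 | Sum.inr B ∈ S ∧ B ≠ A}.Finite :=
    (hS.preimage Sum.inr_injective.injOn).subset fun _ hB ↦ hB.1
  refine ((hS.preimage Sum.inl_injective.injOn).union (hB.biUnion fun B hB ↦
    had.2 A A.2 B B.2 fun h ↦ hB.2 (Subtype.ext h.symm))).subset ?_
  rintro m ⟨hmA, hmS | ⟨B, hBA, hBS, hmB⟩⟩
  · exact Or.inl hmS
  · exact Or.inr (mem_biUnion ⟨hBS, hBA⟩ ⟨hmA, hmB⟩)

def nbhd (F : 𝒜 → Set ℕ) : PsiSpace 𝒜 → Set (PsiSpace 𝒜)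
  | .inl k => {.inl k}
  | .inr A => insert (.inr A) (.inl '' ((A : Set ℕ) \ F A))

variable {F : 𝒜 → Set ℕ}

lemma mem_nbhd_self (x : PsiSpace 𝒜) : x ∈ nbhd F x := by
  cases x <;> simp [nbhd]

lemma inr_mem_nbhd {x : PsiSpace 𝒜} {B : 𝒜} : Sum.inr B ∈ nbhd F x ↔ x = Sum.inr B := by
  cases x <;> simp [nbhd, eq_comm]

lemma isOpen_nbhd (hF : ∀ A, (F A).Finite) (x : PsiSpace 𝒜) : IsOpen (nbhd F x) := by
  intro B hB
  obtain rfl := inr_mem_nbhd.mp hB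
  exact (hF B).subset fun m ⟨hmB, hm⟩ ↦ by_contra fun hmF ↦ hm (by simp [nbhd, hmB, hmF])

lemma sUnion_range_nbhd : ⋃₀ range (nbhd F) = univ :=
  eq_univ_of_forall fun x ↦ ⟨_, mem_range_self x, mem_nbhd_self x⟩

lemma inr_notMem_starSet_nbhd {A : 𝒜} {S : Set (PsiSpace 𝒜)} (hAS : Sum.inr A ∉ S)
    (hF : trace A S ⊆ F A) : Sum.inr A ∉ starSet (⋃₀ (nbhd F '' S)) (range (nbhd F)) := by
  rintro ⟨_, ⟨⟨y, rfl⟩, x, hxy, _, ⟨z, hzS, rfl⟩, hxz⟩, hAy⟩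
  obtain rfl := inr_mem_nbhd.mp hAy
  rcases x with m | B
  · obtain ⟨hmA, hmF⟩ : m ∈ (A : Set ℕ) ∧ m ∉ F A := by simpa [nbhd] using hxy
    refine hmF (hF ⟨hmA, ?_⟩)
    rcases z with k | B
    · obtain rfl : m = k := by simpa [nbhd] using hxz
      exact Or.inl hzS
    · have hmB : m ∈ (B : Set ℕ) := (by simpa [nbhd] using hxz : _ ∧ _).1
      exact Or.inr ⟨B, by rintro rfl; exact hAS hzS, hzS, hmB⟩
  · obtain rfl := inr_mem_nbhd.mp hxz
    obtain rfl := Sum.inr_injective (inr_mem_nbhd.mp hxy)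
    exact hAS hzS

/-- A selection `ℱ n` from the covers is coded by the finite set `σ n` of centres of its
members. Since `s` is injective, `invFun s` recovers `σ` from `s σ`, so the neighbourhoods of
`s σ` can be shrunk by exactly `trace (s σ) (σ n)`, which keeps `s σ` out of every star. -/
theorem not_starMenger_of_injective (had : AlmostDisjoint 𝒜)
    (s : (ℕ → Finset (PsiSpace 𝒜)) → 𝒜) (hs : Function.Injective s)
    (havoid : ∀ σ n, Sum.inr (s σ) ∉ σ n) : ¬ StarMenger (PsiSpace 𝒜) := by
  intro hm
  set F : ℕ → 𝒜 → Set ℕ := fun n A ↦ trace A (Function.invFun s A n)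
  obtain ⟨ℱ, hℱ, hstar⟩ := hm (fun n ↦ range (nbhd (F n)))
    (by
      rintro n _ ⟨x, rfl⟩
      exact isOpen_nbhd (fun A ↦ trace_finite had A (Finset.finite_toSet _)) x)
    (fun n ↦ sUnion_range_nbhd)
  have hσ : ∀ n, ∃ σn : Finset (PsiSpace 𝒜), nbhd (F n) '' σn = ℱ n := fun n ↦ by
    obtain ⟨t, -, ht, hℱt⟩ := exists_subset_image_finite_and.mp
      ⟨ℱ n, by rw [image_univ]; exact (hℱ n).1, (hℱ n).2, rfl⟩
    exact ⟨ht.toFinset, by rw [ht.coe_toFinset, hℱt]⟩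
  choose σ hσ using hσ
  have hF : ∀ n, F n (s σ) = trace (s σ) (σ n) := by
    simp [F, Function.leftInverse_invFun hs σ]
  obtain ⟨n, hn⟩ := mem_iUnion.mp (hstar ▸ mem_univ (Sum.inr (s σ)))
  exact inr_notMem_starSet_nbhd (havoid σ n) (hF n).ge (hσ n ▸ hn)

theorem mk_lt_continuum_of_starMenger (had : AlmostDisjoint 𝒜)
    (hm : StarMenger (PsiSpace 𝒜)) : #𝒜 < 𝔠 := by
  refine ((Cardinal.mk_set_le 𝒜).trans_eq Cardinal.mk_set_nat).lt_of_ne fun h𝒜 ↦ ?_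
  have : Uncountable (ℕ → ℕ) :=
    Cardinal.aleph0_lt_mk_iff.mp (by simp [Cardinal.aleph0_lt_continuum])
  obtain ⟨j⟩ := (Cardinal.le_def _ _).mp ((mk_seq_finset_prod_baire h𝒜).trans h𝒜.symm).le
  obtain ⟨s, hs, havoid⟩ := exists_injective_forall_notMem j
    (fun σ ↦ ⋃ n, Sum.inr ⁻¹' (σ n : Set (PsiSpace 𝒜)))
    (fun σ ↦ countable_iUnion fun n ↦
      ((σ n).finite_toSet.preimage Sum.inr_injective.injOn).countable)
  exact not_starMenger_of_injective had s hs (fun σ n h ↦ havoid σ (mem_iUnion_of_mem n h)) hm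

end PsiSpace

/-- if `𝔟 = 𝔠`, every star-Menger Ψ-space is strongly star-Hurewicz. -/
theorem starMenger_implies_stronglyStarHurewicz (hb : bNum = Cardinal.continuum)
    (𝒜 : Set (Set ℕ)) (had : AlmostDisjoint 𝒜)
    (hm : StarMenger (PsiSpace 𝒜)) :
    StronglyStarHurewicz (PsiSpace 𝒜) :=
  PsiSpace.stronglyStarHurewicz_of_mk_lt_bNum had.1
    (hb ▸ PsiSpace.mk_lt_continuum_of_starMenger had hm)
end
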